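/- arXiv:2509.26323 — 9 statements merged into one kernel-verified Lean document; each statement's English description precedes it below -/
import Mathlib

section
/- Let m ≥ 4 be an even integer, let t ≥ 2 and k ≥ 1 be integers, and let n be an integer with (t−1)(m−1) ≤ n−1. Then the disjoint union F of t+k−1 copies of the complete graph K_{m−1} contains no cycle of length m, and its complement contains no B_n^{(k)}; consequently R(C_m, B_n^{(k)}) ≥ (t+k−1)(m−1) + 1. -/
/-- `G` contains a cycle of length `m`. -/
def HasCycleLen {V : Type*} (G : SimpleGraph V) (m : ℕ) : Prop :=
  ∃ (v : V) (c : G.Walk v v), c.IsCycle ∧ c.length = m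

/-- `G` contains the book `B_n^{(k)}`: a clique on `k` vertices together with
`n` further vertices each adjacent to all of them. -/
def HasBook {V : Type*} (G : SimpleGraph V) (k n : ℕ) : Prop :=
  ∃ S T : Finset V, S.card = k ∧ T.card = n ∧ Disjoint S T ∧
    (∀ u ∈ S, ∀ v ∈ S, u ≠ v → G.Adj u v) ∧
    (∀ u ∈ S, ∀ v ∈ T, G.Adj u v)

/-- Every simple graph on `N` vertices contains `C_m` or its complement contains
`B_n^{(k)}`. The Ramsey number `R(C_m, B_n^{(k)})` is the least such `N`. -/
def RamseyProp (m k n N : ℕ) : Prop :=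
  ∀ G : SimpleGraph (Fin N), HasCycleLen G m ∨ HasBook Gᶜ k n

/-- The disjoint union of `a` copies of the complete graph `K_b`:
two vertices are adjacent iff they are distinct and lie in the same copy. -/
def cliquesUnion (a b : ℕ) : SimpleGraph (Fin a × Fin b) :=
  SimpleGraph.fromRel fun u v => u.1 = v.1

/-!
`cliquesUnion a b` has no cycle longer than `b`, since a walk never leaves its copy of `K_b`.
In its complement, the `k` spine vertices of a book lie in `k` distinct copies and every page
must avoid all of them, leaving at most `(a - k) * b` candidate pages. With `a = t + k - 1`
and `b = m - 1` both obstructions apply; since both properties pass along graph embeddings,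
no `N ≤ (t + k - 1)(m - 1)` can be a Ramsey number.
-/

open SimpleGraph Finset

section Embedding

variable {V W : Type*} {G : SimpleGraph V} {G' : SimpleGraph W}

theorem HasCycleLen.map (f : G ↪g G') {m : ℕ} : HasCycleLen G m → HasCycleLen G' m := by
  rintro ⟨v, c, hc, rfl⟩
  exact ⟨f v, c.map f.toHom, hc.map f.injective, Walk.length_map _ _⟩

theorem HasBook.map (f : G ↪g G') {k n : ℕ} : HasBook G k n → HasBook G' k n := by
  classical
  rintro ⟨S, T, hS, hT, hST, hSS, hSpages⟩
  refine ⟨S.map f.toEmbedding, T.map f.toEmbedding, by simpa using hS, by simpa using hT,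
    disjoint_map _ |>.mpr hST, ?_, ?_⟩
  · simp only [mem_map, RelEmbedding.coe_toEmbedding, forall_exists_index, and_imp,
      forall_apply_eq_imp_iff₂]
    intro u hu v hv huv
    exact f.map_adj_iff.mpr (hSS u hu v hv (ne_of_apply_ne f huv))
  · simp only [mem_map, RelEmbedding.coe_toEmbedding, forall_exists_index, and_imp,
      forall_apply_eq_imp_iff₂]
    intro u hu v hv
    exact f.map_adj_iff.mpr (hSpages u hu v hv)

theorem card_lt_of_ramseyProp [Fintype V] (G : SimpleGraph V) {m k n N : ℕ}
    (hC : ¬ HasCycleLen G m) (hB : ¬ HasBook Gᶜ k n) (hR : RamseyProp m k n N) :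
    Fintype.card V < N := by
  by_contra! hN
  obtain ⟨f⟩ : Nonempty (Fin N ↪ V) :=
    Function.Embedding.nonempty_of_card_le (by simpa using hN)
  let e : G.comap f ↪g G := Embedding.comap f G
  rcases hR (G.comap f) with hcyc | hbook
  · exact hC (hcyc.map e)
  · exact hB (hbook.map (Embedding.complEquiv e))

end Embedding

namespace cliquesUnion

variable {a b : ℕ}

theorem adj_iff {u v : Fin a × Fin b} :
    (cliquesUnion a b).Adj u v ↔ u ≠ v ∧ u.1 = v.1 := by
  simp only [cliquesUnion, fromRel_adj, eq_comm (a := v.1), or_self]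

theorem fst_eq_of_mem_support {u w x : Fin a × Fin b} (p : (cliquesUnion a b).Walk u w)
    (hx : x ∈ p.support) : x.1 = u.1 := by
  induction p with
  | nil => rw [Walk.support_nil, List.mem_singleton] at hx; rw [hx]
  | cons h p ih =>
    rcases List.mem_cons.mp hx with rfl | hx
    · rfl
    · rw [ih hx, (adj_iff.mp h).2]

theorem length_le_of_isCycle {v : Fin a × Fin b} {c : (cliquesUnion a b).Walk v v}
    (hc : c.IsCycle) : c.length ≤ b := by
  have hfst : ∀ x ∈ c.support.tail, x.1 = v.1 := fun x hx =>
    fst_eq_of_mem_support c (List.mem_of_mem_tail hx)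
  have hnodup : (c.support.tail.map Prod.snd).Nodup :=
    hc.support_nodup.map_on fun x hx y hy hxy => Prod.ext ((hfst x hx).trans (hfst y hy).symm) hxy
  simpa [Walk.length_support] using hnodup.length_le_card

theorem not_hasCycleLen {m : ℕ} (h : b < m) : ¬ HasCycleLen (cliquesUnion a b) m := by
  rintro ⟨v, c, hc, rfl⟩
  exact h.not_ge (length_le_of_isCycle hc)

theorem fst_ne_of_compl_adj {u v : Fin a × Fin b} (h : (cliquesUnion a b)ᶜ.Adj u v) :
    u.1 ≠ v.1 :=
  fun he => h.2 (adj_iff.mpr ⟨h.ne, he⟩)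

theorem le_of_hasBook_compl {k n : ℕ} (h : HasBook (cliquesUnion a b)ᶜ k n) :
    n ≤ (a - k) * b := by
  classical
  obtain ⟨S, T, hS, rfl, -, hSS, hSpages⟩ := h
  have hspine : (S.image Prod.fst).card = k := by
    rw [card_image_of_injOn, hS]
    intro x hx y hy hxy
    by_contra hne
    exact fst_ne_of_compl_adj (hSS x hx y hy hne) hxy
  have hpages : T ⊆ (S.image Prod.fst)ᶜ ×ˢ univ := by
    intro x hx
    simp only [mem_product, mem_compl, mem_image, mem_univ, and_true, not_exists, not_and]
    exact fun u hu hux => fst_ne_of_compl_adj (hSpages u hu x hx) hux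
  simpa [card_compl, hspine] using card_le_card hpages

end cliquesUnion

theorem stmt4_general (t k m n : ℕ) (ht : 2 ≤ t)
    (hm : 4 ≤ m) (hn1 : (t - 1) * (m - 1) ≤ n - 1) :
    ¬ HasCycleLen (cliquesUnion (t + k - 1) (m - 1)) m ∧
    ¬ HasBook (cliquesUnion (t + k - 1) (m - 1))ᶜ k n ∧
    ∀ N : ℕ, RamseyProp m k n N → (t + k - 1) * (m - 1) + 1 ≤ N := by
  have hC := cliquesUnion.not_hasCycleLen (a := t + k - 1) (b := m - 1) (m := m) (by omega)
  have hB : ¬ HasBook (cliquesUnion (t + k - 1) (m - 1))ᶜ k n := by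
    intro h
    have hpos : 0 < (t - 1) * (m - 1) := Nat.mul_pos (by omega) (by omega)
    have := cliquesUnion.le_of_hasBook_compl h
    rw [show t + k - 1 - k = t - 1 by omega] at this
    omega
  refine ⟨hC, hB, fun N hR => ?_⟩
  simpa using card_lt_of_ramseyProp _ hC hB hR

theorem stmt4 (t k m n : ℕ) (ht : 2 ≤ t) (hk : 1 ≤ k) (hmEven : Even m)
    (hm : 4 ≤ m) (hn1 : (t - 1) * (m - 1) ≤ n - 1) :
    ¬ HasCycleLen (cliquesUnion (t + k - 1) (m - 1)) m ∧
    ¬ HasBook (cliquesUnion (t + k - 1) (m - 1))ᶜ k n ∧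
    ∀ N : ℕ, RamseyProp m k n N → (t + k - 1) * (m - 1) + 1 ≤ N :=
  stmt4_general t k m n ht hm hn1
end

section
/- Let t ≥ 2 and k ≥ 1 be integers, let m be an even integer with m ≥ 4(t+k)+2, let n be an integer with (t−1)(m−1) ≤ n−1 < t(m−1), and set p = ⌊(n−1)/t⌋. If p < m−k, then R(C_m, B_n^{(k)}) ≥ n + kp + k; that is, there is a graph on n + kp + k − 1 vertices containing no cycle of length m whose complement contains no B_n^{(k)}. -/
/-
The graph is a "spider" together with disjoint cliques: a body clique on `s` vertices, `z`
petals `K_{p+1}` each sharing exactly one vertex with the body (different petals at different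
body vertices), and cliques of orders between `p + 1` and `m - 1`. Every block has fewer than
`m` vertices, so there is no `C_m`. For the book, the closed neighbourhoods of an independent
`k`-set must cover at least `k (p + 1)` vertices: petal and clique vertices of the set own
disjoint blocks of at least `p + 1` vertices, and if the set contains a body vertex (at most
one), the body has `s ≥ p + k` vertices, which pays for the attachment vertices the petals then
have to give up. The petals are what make the graph small enough: `p + 1` vertices of a
neighbourhood cost only `p` vertices of the graph.
-/

open SimpleGraph Finset

section Embedding

variable {V V' : Type*} {G : SimpleGraph V} {G' : SimpleGraph V'}

theorem SimpleGraph.Embedding.hasCycleLen {m : ℕ} (f : G ↪g G') :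
    HasCycleLen G m → HasCycleLen G' m
  | ⟨v, c, hc, hlen⟩ => ⟨f v, c.map f.toHom,
    (Walk.isCycle_map_iff_of_injective f.injective).2 hc, by rw [Walk.length_map, hlen]⟩

theorem SimpleGraph.Embedding.hasBook {k n : ℕ} (f : G ↪g G') :
    HasBook G k n → HasBook G' k n := by
  rintro ⟨S, T, hS, hT, hST, hSS, hSTadj⟩
  refine ⟨S.map f.toEmbedding, T.map f.toEmbedding, by rw [card_map, hS],
    by rw [card_map, hT], disjoint_map _ |>.2 hST, ?_, ?_⟩
  · simp only [mem_map]
    rintro _ ⟨u, hu, rfl⟩ _ ⟨v, hv, rfl⟩ huv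
    exact f.map_adj_iff.2 (hSS u hu v hv (ne_of_apply_ne _ huv))
  · simp only [mem_map]
    rintro _ ⟨u, hu, rfl⟩ _ ⟨v, hv, rfl⟩
    exact f.map_adj_iff.2 (hSTadj u hu v hv)

end Embedding

theorem RamseyProp.mono {m k n N N' : ℕ} (h : N ≤ N') (hR : RamseyProp m k n N) :
    RamseyProp m k n N' := fun G =>
  let f := Embedding.comap (Fin.castLEEmb h) G
  (hR _).imp f.hasCycleLen (Embedding.complEquiv f).hasBook

theorem lt_of_ramseyProp {m k n N M : ℕ} {G : SimpleGraph (Fin M)} (hG : ¬ HasCycleLen G m)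
    (hGc : ¬ HasBook Gᶜ k n) (hR : RamseyProp m k n N) : M < N := by
  by_contra! h
  exact (hR.mono h G).elim hG hGc

theorem exists_fin_graph_of_fintype {V : Type*} [Fintype V] {m k n : ℕ} {G : SimpleGraph V}
    (hG : ¬ HasCycleLen G m) (hGc : ¬ HasBook Gᶜ k n) :
    ∃ G' : SimpleGraph (Fin (Fintype.card V)), ¬ HasCycleLen G' m ∧ ¬ HasBook G'ᶜ k n :=
  let f := Embedding.comap (Fintype.equivFin V).symm.toEmbedding G
  ⟨_, mt f.hasCycleLen hG, mt (Embedding.complEquiv f).hasBook hGc⟩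

namespace SimpleGraph.Walk

variable {V : Type*} {G : SimpleGraph V}

theorem IsCycle.length_le_card [DecidableEq V] {v : V} {c : G.Walk v v} (hc : c.IsCycle)
    {F : Finset V} (hF : ∀ x ∈ c.support, x ∈ F) : c.length ≤ F.card :=
  calc c.length = c.support.tail.length := by simp [c.length_support]
    _ = c.support.tail.toFinset.card := (List.toFinset_card_of_nodup hc.support_nodup).symm
    _ ≤ F.card := card_le_card fun x hx => hF x (List.mem_of_mem_tail (List.mem_toFinset.1 hx))

theorem forall_mem_support_iff {P : V → Prop} (hP : ∀ u v, G.Adj u v → P u → P v) :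
    ∀ {a b : V} (w : G.Walk a b), ∀ x ∈ w.support, P x ↔ P a
  | _, _, nil, _, hx => by rw [mem_support_nil_iff.1 hx]
  | _, _, cons h w, x, hx => by
    rcases (mem_support_iff _).1 hx with rfl | hx
    · rfl
    · rw [forall_mem_support_iff hP w x hx]
      exact ⟨hP _ _ h.symm, hP _ _ h⟩

variable {A : Set V} {x : V}

theorem mem_support_of_forall_adj_not_mem (hA : ∀ a b, a ∈ A → b ∉ A → G.Adj a b → b = x) :
    ∀ {a b : V} (w : G.Walk a b), a ∈ A → b ∉ A → x ∈ w.support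
  | _, _, nil, ha, hb => absurd ha hb
  | _, _, cons (v := c) h w, ha, hb => by
    rw [support_cons]
    by_cases hc : c ∈ A
    · exact List.mem_cons_of_mem _ (mem_support_of_forall_adj_not_mem hA w hc hb)
    · rw [← hA _ _ ha hc h]
      exact List.mem_cons_of_mem _ w.start_mem_support

/-- A cycle through a vertex of `A` cannot leave `A ∪ {x}` when `x` is a cut vertex separating
`A`: it would have to pass through `x` twice. -/
theorem IsCycle.mem_or_eq_of_forall_adj_not_mem (hxA : x ∉ A)
    (hA : ∀ a b, a ∈ A → b ∉ A → G.Adj a b → b = x) {v : V} {c : G.Walk v v} (hc : c.IsCycle)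
    {u : V} (hu : u ∈ c.support) (huA : u ∈ A) {b : V} (hb : b ∈ c.support) :
    b ∈ A ∨ b = x := by
  classical
  by_contra! hbx
  have hb' : b ∈ (c.rotate u hu).support := (mem_support_rotate_iff ..).2 hb
  have hx₁ : x ∈ ((c.rotate u hu).takeUntil b hb').support.tail :=
    ((mem_support_iff _).1 (mem_support_of_forall_adj_not_mem hA _ huA hbx.1)).resolve_left
      fun h => hxA (h ▸ huA)
  have hx₂ : x ∈ ((c.rotate u hu).dropUntil b hb').support.tail := by
    have := mem_support_of_forall_adj_not_mem hA ((c.rotate u hu).dropUntil b hb').reverse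
      huA hbx.1
    rw [support_reverse, List.mem_reverse] at this
    exact ((mem_support_iff _).1 this).resolve_left hbx.2.symm
  have hnd := (hc.rotate hu).support_nodup
  rw [← (c.rotate u hu).take_spec hb', tail_support_append] at hnd
  exact List.disjoint_of_nodup_append hnd hx₁ hx₂

end SimpleGraph.Walk

theorem not_hasBook_compl_of_forall_isIndepSet {V : Type*} [Fintype V] {G : SimpleGraph V}
    {k n : ℕ}
    (h : ∀ S : Finset V, S.card = k → G.IsIndepSet S → ∃ F : V → Finset V,
      (∀ u ∈ S, ∀ v ∈ F u, v = u ∨ G.Adj u v) ∧ (S : Set V).PairwiseDisjoint F ∧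
      Fintype.card V < n + ∑ u ∈ S, (F u).card) :
    ¬ HasBook Gᶜ k n := by
  classical
  rintro ⟨S, T, hS, hT, hST, hSS, hSTadj⟩
  obtain ⟨F, hFadj, hFdisj, hcard⟩ :=
    h S hS fun u hu v hv huv => ((compl_adj G u v).1 (hSS u hu v hv huv)).2
  have hTF : Disjoint T (S.biUnion F) := by
    refine disjoint_left.2 fun v hvT hv => ?_
    obtain ⟨u, hu, hvu⟩ := mem_biUnion.1 hv
    rcases hFadj u hu v hvu with rfl | hadj
    · exact disjoint_left.1 hST hu hvT
    · exact ((compl_adj G u v).1 (hSTadj u hu v hvT)).2 hadj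
  have := card_le_univ (T ∪ S.biUnion F)
  rw [card_union_of_disjoint hTF, card_biUnion hFdisj] at this
  omega

namespace Spider

abbrev Vert (s z p : ℕ) (W : Type*) := Fin s ⊕ (Fin z × Fin p) ⊕ W

variable {s z p : ℕ} {W ι : Type*} (att : Fin z ↪ Fin s) (cl : W → ι)

variable (p) in
/-- The body `Fin s` is a clique, petal `j` is a clique on `Fin p` completely joined to the body
vertex `att j`, and `W` is the disjoint union of the cliques `cl ⁻¹' {b}`. -/
def graph : SimpleGraph (Vert s z p W) where
  Adj
    | .inl i, .inl i' => i ≠ i'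
    | .inl i, .inr (.inl (j, _)) | .inr (.inl (j, _)), .inl i => att j = i
    | .inr (.inl (j, a)), .inr (.inl (j', a')) => j = j' ∧ a ≠ a'
    | .inr (.inr x), .inr (.inr x') => x ≠ x' ∧ cl x = cl x'
    | _, _ => False
  symm := ⟨by rintro (i | ⟨j, a⟩ | x) (i' | ⟨j', a'⟩ | x') h <;> simp_all [eq_comm]⟩
  loopless := ⟨by rintro (i | ⟨j, a⟩ | x) <;> simp⟩

def body : Finset (Vert s z p W) := univ.map .inl

def petal (j : Fin z) : Finset (Vert s z p W) :=
  univ.map ((Function.Embedding.sectR j _).trans (.trans .inl .inr))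

def petalBlock (j : Fin z) : Finset (Vert s z p W) :=
  (petal j).cons (.inl (att j)) (by simp [petal])

theorem card_body : (body : Finset (Vert s z p W)).card = s := by simp [body]

theorem card_petal (j : Fin z) : (petal j : Finset (Vert s z p W)).card = p := by
  simp [petal]

theorem card_petalBlock (j : Fin z) :
    (petalBlock att j : Finset (Vert s z p W)).card = p + 1 := by
  simp [petalBlock, card_petal]

theorem mem_petalBlock_of_mem_support {v : Vert s z p W} {c : (graph p att cl).Walk v v}
    (hc : c.IsCycle) {j : Fin z} {a : Fin p} (ha : .inr (.inl (j, a)) ∈ c.support) :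
    ∀ b ∈ c.support, b ∈ petalBlock att j := by
  have hcut : ∀ u w, u ∈ ((petal j : Finset (Vert s z p W)) : Set _) →
      w ∉ ((petal j : Finset (Vert s z p W)) : Set _) → (graph p att cl).Adj u w →
      w = .inl (att j) := by
    intro u w hu hw huw
    obtain ⟨b, rfl⟩ : ∃ b, .inr (.inl (j, b)) = u := by simpa [petal] using hu
    rcases w with i | ⟨j', a'⟩ | x <;> simp_all [petal, graph]
  intro b hb
  rcases hc.mem_or_eq_of_forall_adj_not_mem (by simp [petal]) hcut ha (by simp [petal]) hb
    with h | rfl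
  · exact mem_cons_of_mem h
  · exact mem_cons_self _ _

variable [Fintype W] [DecidableEq ι]

def clique (b : ι) : Finset (Vert s z p W) :=
  ({x | cl x = b} : Finset W).map (.trans .inr .inr)

theorem card_clique (b : ι) :
    (clique cl b : Finset (Vert s z p W)).card = #{x | cl x = b} := by
  simp [clique]

theorem mem_clique_of_mem_support {u v : Vert s z p W} (w : (graph p att cl).Walk u v) {x : W}
    (hx : .inr (.inr x) ∈ w.support) : ∀ b ∈ w.support, b ∈ clique cl (cl x) := by
  have hclosed : ∀ a b, (graph p att cl).Adj a b → a ∈ clique cl (cl x) →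
      b ∈ clique cl (cl x) := by
    intro a b hab ha
    rcases a with i | ⟨j, a⟩ | y <;> rcases b with i' | ⟨j', a'⟩ | y' <;>
      simp_all [clique, graph]
  exact fun b hb => (w.forall_mem_support_iff hclosed b hb).2 <|
    (w.forall_mem_support_iff hclosed _ hx).1 (by simp [clique])

theorem not_hasCycleLen {m : ℕ} (hsm : s < m) (hpm : p + 1 < m)
    (hcl : ∀ b, #{x | cl x = b} < m) : ¬ HasCycleLen (graph p att cl) m := by
  classical
  rintro ⟨v, c, hc, rfl⟩
  by_cases hpetal : ∃ j a, .inr (.inl (j, a)) ∈ c.support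
  · obtain ⟨j, a, ha⟩ := hpetal
    have := hc.length_le_card (mem_petalBlock_of_mem_support att cl hc ha)
    rw [card_petalBlock] at this
    omega
  by_cases hclique : ∃ x, .inr (.inr x) ∈ c.support
  · obtain ⟨x, hx⟩ := hclique
    have := hc.length_le_card (mem_clique_of_mem_support att cl c hx)
    rw [card_clique] at this
    exact this.not_gt (hcl _)
  have := hc.length_le_card (F := body) fun b hb => by
    rcases b with i | ⟨j, a⟩ | x
    · simp [body]
    · exact (hpetal ⟨j, a, hb⟩).elim
    · exact (hclique ⟨x, hb⟩).elim
  rw [card_body] at this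
  omega

/-- The part of the closed neighbourhood of `u` that avoids the body, except for body vertices,
where it is the body. -/
def core : Vert s z p W → Finset (Vert s z p W)
  | .inl _ => body
  | .inr (.inl (j, _)) => petal j
  | .inr (.inr x) => clique cl (cl x)

def block : Vert s z p W → Finset (Vert s z p W)
  | .inr (.inl (j, _)) => petalBlock att j
  | u => core cl u

theorem mem_block {u v : Vert s z p W} (hv : v ∈ block att cl u) :
    v = u ∨ (graph p att cl).Adj u v := by
  rcases u with i | ⟨j, a⟩ | x <;> rcases v with i' | ⟨j', a'⟩ | x' <;>
    simp [block, core, petalBlock, body, petal, clique, graph] at hv ⊢ <;> grind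

theorem core_subset_block (u : Vert s z p W) : core cl u ⊆ block att cl u := by
  rcases u with i | ⟨j, a⟩ | x
  · rfl
  · exact subset_cons (by simp [core, petal])
  · rfl

theorem disjoint_core {u v : Vert s z p W} (huv : u ≠ v) (h : ¬ (graph p att cl).Adj u v) :
    Disjoint (core cl u) (core cl v) := by
  rcases u with i | ⟨j, a⟩ | x <;> rcases v with i' | ⟨j', a'⟩ | x' <;>
    simp [core, body, petal, clique, graph, Finset.disjoint_left] at huv h ⊢ <;> grind

theorem disjoint_block {u v : Vert s z p W} (hu : u.isRight) (hv : v.isRight) (huv : u ≠ v)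
    (h : ¬ (graph p att cl).Adj u v) : Disjoint (block att cl u) (block att cl v) := by
  rcases u with i | ⟨j, a⟩ | x <;> rcases v with i' | ⟨j', a'⟩ | x' <;>
    simp [block, core, petalBlock, petal, clique, graph, Finset.disjoint_left] at hu hv huv h ⊢ <;>
    grind

theorem le_card_core (hps : p ≤ s) (hcl : ∀ x, p ≤ #{x' | cl x' = cl x})
    (u : Vert s z p W) : p ≤ (core cl u).card := by
  rcases u with i | ⟨j, a⟩ | x
  · simpa [core, card_body] using hps
  · simp [core, card_petal]
  · simpa [core, card_clique] using hcl x

theorem le_card_block (hcl : ∀ x, p + 1 ≤ #{x' | cl x' = cl x})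
    {u : Vert s z p W} (hu : u.isRight) : p + 1 ≤ (block att cl u).card := by
  rcases u with i | ⟨j, a⟩ | x
  · simp at hu
  · simp [block, card_petalBlock]
  · simpa [block, core, card_clique] using hcl x

theorem not_hasBook_compl {k n : ℕ} (hps : p + k ≤ s) (hcl : ∀ x, p + 1 ≤ #{x' | cl x' = cl x})
    (hcard : Fintype.card (Vert s z p W) < n + k * (p + 1)) :
    ¬ HasBook (graph p att cl)ᶜ k n := by
  classical
  refine not_hasBook_compl_of_forall_isIndepSet fun S hSk hS => ?_
  -- `S` has at most one body vertex; if it has one, the whole body stands in for the attachment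
  -- vertices that the petal vertices of `S` can no longer claim.
  by_cases hbody : ∃ i, .inl i ∈ S
  · obtain ⟨i, hi⟩ := hbody
    refine ⟨core cl, fun u _ v hv => mem_block att cl (core_subset_block att cl u hv),
      fun u hu v hv huv => disjoint_core att cl huv (hS hu hv huv), ?_⟩
    have hk : 1 ≤ k := hSk ▸ card_pos.2 ⟨_, hi⟩
    have hcore : (core cl (.inl i : Vert s z p W)).card = s := card_body
    have hrest : (k - 1) * p ≤ ∑ u ∈ S.erase (.inl i), (core cl u).card := by
      simpa [card_erase_of_mem hi, hSk] using card_nsmul_le_sum (S.erase (.inl i)) _ _ fun u _ =>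
        le_card_core cl ((Nat.le_add_right p k).trans hps) (fun x => (hcl x).trans' p.le_succ) u
    rw [← add_sum_erase S _ hi, hcore]
    obtain ⟨k, rfl⟩ := Nat.exists_eq_add_of_le' hk
    simp only [Nat.add_sub_cancel] at hrest
    nlinarith
  · have hright : ∀ u ∈ S, u.isRight := by
      rintro (i | u) hu
      · exact (hbody ⟨i, hu⟩).elim
      · rfl
    refine ⟨block att cl, fun u _ v hv => mem_block att cl hv,
      fun u hu v hv huv => disjoint_block att cl (hright u hu) (hright v hv) huv (hS hu hv huv), ?_⟩
    have := card_nsmul_le_sum S _ _ fun u hu => le_card_block att cl hcl (hright u hu)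
    rw [hSk, smul_eq_mul] at this
    omega

end Spider

theorem card_filter_sigma_fst_eq {c : ℕ} (f : Fin c → ℕ) (i : Fin c) :
    #{x : Σ i, Fin (f i) | x.1 = i} = f i := by
  have : ({x | x.1 = i} : Finset (Σ i, Fin (f i))) = univ.map (.sigmaMk i) := by
    ext ⟨j, a⟩
    simp only [mem_filter, mem_univ, true_and, mem_map, Function.Embedding.sigmaMk_apply]
    constructor
    · rintro rfl
      exact ⟨a, rfl⟩
    · rintro ⟨b, h⟩
      cases h
      rfl
  rw [this, card_map, card_univ, Fintype.card_fin]

theorem exists_fin_sum_eq {a b c L : ℕ} (hab : a ≤ b) (h₁ : c * a ≤ L) (h₂ : L ≤ c * b) :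
    ∃ f : Fin c → ℕ, (∀ i, a ≤ f i ∧ f i ≤ b) ∧ ∑ i, f i = L := by
  induction c generalizing L with
  | zero => exact ⟨Fin.elim0, fun i => i.elim0, by simp_all⟩
  | succ c ih =>
    have hcab : c * a ≤ c * b := Nat.mul_le_mul_left c hab
    rw [add_one_mul] at h₁ h₂
    obtain ⟨f, hf, hsum⟩ := ih (L := L - min b (L - c * a)) (by omega) (by omega)
    refine ⟨Fin.cons (min b (L - c * a)) f,
      Fin.cases (by simp only [Fin.cons_zero]; omega) (by simpa using hf), ?_⟩
    rw [Fin.sum_cons, hsum]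
    omega

theorem exists_graph_of_spider {m k n s z p c M : ℕ} (hzs : z ≤ s) (hps : p + k ≤ s)
    (hsm : s < m) (hpm : p + 1 < m) (f : Fin c → ℕ) (hf : ∀ i, p + 1 ≤ f i ∧ f i < m)
    (hM : s + z * p + ∑ i, f i = M) (hMn : M < n + k * (p + 1)) :
    ∃ G : SimpleGraph (Fin M), ¬ HasCycleLen G m ∧ ¬ HasBook Gᶜ k n := by
  have hcard : Fintype.card (Spider.Vert s z p (Σ i, Fin (f i))) = M := by
    simp [← hM, add_assoc]
  obtain ⟨G, hG⟩ := exists_fin_graph_of_fintype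
    (Spider.not_hasCycleLen (Fin.castLEEmb hzs) Sigma.fst hsm hpm fun i =>
      (card_filter_sigma_fst_eq f i).trans_lt (hf i).2)
    (Spider.not_hasBook_compl (Fin.castLEEmb hzs) Sigma.fst hps
      (fun x => (card_filter_sigma_fst_eq f x.1).symm ▸ (hf x.1).1) (hcard ▸ hMn))
  exact hcard ▸ ⟨G, hG⟩

/-- Write `n - 1 = t p + r` and `m - 1 = p + q`. The `k + r` vertices beyond `(t + k) p` go into
the body while it stays below `m`; otherwise the body gets `m - 1` vertices and `d` of the
`t + k - 1` petals are traded for `d` cliques of orders between `p + 1` and `m - 1`. -/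
theorem exists_spider_parameters {t k m n p : ℕ} (ht : 2 ≤ t) (hk : 1 ≤ k)
    (hm : 4 * (t + k) + 2 ≤ m) (hn1 : (t - 1) * (m - 1) ≤ n - 1) (hp : p = (n - 1) / t)
    (hcase : p < m - k) :
    ∃ s z c L, z ≤ s ∧ p + k ≤ s ∧ s < m ∧ c * (p + 1) ≤ L ∧ L ≤ c * (m - 1) ∧
      s + z * p + L = n + k * p + k - 1 := by
  obtain ⟨T, rfl⟩ : ∃ T, t = T + 1 := ⟨t - 1, by omega⟩
  obtain ⟨r, hr, hnr⟩ : ∃ r, r < T + 1 ∧ (T + 1) * p + r = n - 1 :=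
    ⟨_, Nat.mod_lt _ (by omega), hp ▸ Nat.div_add_mod (n - 1) (T + 1)⟩
  obtain ⟨q, hq⟩ : ∃ q, m - 1 = p + q := ⟨m - 1 - p, by omega⟩
  rw [Nat.add_sub_cancel, hq] at hn1
  rw [hq]
  have hkq : k ≤ q := by omega
  have hpT : T + k ≤ p := by
    by_contra! h
    nlinarith [Nat.mul_le_mul_left T (show 4 * (T + 1 + k) + 1 ≤ p + q by omega),
      Nat.mul_le_mul_left (T + 1) (show p + 1 ≤ T + k from h)]
  obtain ⟨d, hd⟩ : ∃ d, d = (k + r - 1) / q := ⟨_, rfl⟩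
  have hd₁ : d * q ≤ k + r - 1 := hd ▸ Nat.div_mul_le_self _ _
  have hd₂ : k + r - 1 < q * (d + 1) := hd ▸ Nat.lt_mul_div_succ _ (by omega)
  have hdq : d ≤ d * q := Nat.le_mul_of_pos_right d (by omega)
  have hs : min (p + q) (p + k + r) + d ≤ p + k + r := by
    rcases d with _ | d
    · omega
    · obtain ⟨q, rfl⟩ : ∃ q', q = q' + 1 := ⟨q - 1, by omega⟩
      have : (d + 1) * (q + 1) = d * q + d + q + 1 := by ring
      omega
  have hpetals : (T + k - d) * p + (d + 1) * p = (T + 1) * p + k * p := by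
    rw [← add_mul, ← add_mul]
    congr 1
    omega
  have : (d + 1) * p = d * p + p := by ring
  have : d * (p + 1) = d * p + d := by ring
  have : d * (p + q) = d * p + d * q := by ring
  have : q * (d + 1) = d * q + q := by ring
  have : p ≤ (T + 1) * p := Nat.le_mul_of_pos_left p (by omega)
  exact ⟨min (p + q) (p + k + r), T + k - d, d, (d + 1) * p + k + r - min (p + q) (p + k + r),
    by omega, by omega, by omega, by omega, by omega, by omega⟩

theorem stmt5_general (t k m n p : ℕ) (ht : 2 ≤ t) (hk : 1 ≤ k)
    (hm : 4 * (t + k) + 2 ≤ m)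
    (hn1 : (t - 1) * (m - 1) ≤ n - 1)
    (hp : p = (n - 1) / t) (hcase : p < m - k) :
    (∀ N : ℕ, RamseyProp m k n N → n + k * p + k ≤ N) ∧
    ∃ G : SimpleGraph (Fin (n + k * p + k - 1)),
      ¬ HasCycleLen G m ∧ ¬ HasBook Gᶜ k n := by
  obtain ⟨s, z, c, L, hzs, hps, hsm, hL₁, hL₂, hM⟩ :=
    exists_spider_parameters ht hk hm hn1 hp hcase
  obtain ⟨f, hf, hfL⟩ := exists_fin_sum_eq (by omega) hL₁ hL₂
  obtain ⟨G, hG, hGc⟩ := exists_graph_of_spider (n := n) hzs hps hsm (by omega) f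
    (fun i => ⟨(hf i).1, by have := (hf i).2; omega⟩) (hfL ▸ hM) (by rw [mul_add_one]; omega)
  exact ⟨fun N hN => by have := lt_of_ramseyProp hG hGc hN; omega, G, hG, hGc⟩

theorem stmt5 (t k m n p : ℕ) (ht : 2 ≤ t) (hk : 1 ≤ k) (hmEven : Even m)
    (hm : 4 * (t + k) + 2 ≤ m)
    (hn1 : (t - 1) * (m - 1) ≤ n - 1) (hn2 : n - 1 < t * (m - 1))
    (hp : p = (n - 1) / t) (hcase : p < m - k) :
    (∀ N : ℕ, RamseyProp m k n N → n + k * p + k ≤ N) ∧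
    ∃ G : SimpleGraph (Fin (n + k * p + k - 1)),
      ¬ HasCycleLen G m ∧ ¬ HasBook Gᶜ k n :=
  stmt5_general t k m n p ht hk hm hn1 hp hcase
end

section
/- Assume the partition setup for R, W, V_1, …, V_s, W_1, …, W_s, U_1, …, U_s. Suppose m is an even integer with m ≥ 4s, R contains no cycle of length m, |V_i ∪ V_j| ≥ m for all 1 ≤ i ≠ j ≤ s, and for every 1 ≤ i ≤ s, every pair of distinct vertices x, y ∈ V_i, and every integer L with 2 ≤ L ≤ m/2, there is a path in R from x to y of length L all of whose vertices lie in V_i. Let F be the bipartite graph with parts W and {1, …, s} in which w ∈ W is joined to i if and only if w ∈ U_i. Then F is a forest (contains no cycle). -/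
/-- The subgraph of `R` induced by the finite vertex set `A` is 2-connected:
it has at least 3 vertices, is connected, and remains connected after deleting
any one vertex. -/
def TwoConnectedOn {V : Type*} [DecidableEq V] (R : SimpleGraph V) (A : Finset V) : Prop :=
  3 ≤ A.card ∧ (R.induce (A : Set V)).Connected ∧
    ∀ v ∈ A, (R.induce ((A.erase v : Finset V) : Set V)).Connected

/-- `W_i`: the vertices of `W` having at least `2s` neighbours (in `R`) inside `A`. -/
def bigNbrSet {V : Type*} [DecidableEq V] (R : SimpleGraph V) [DecidableRel R.Adj]
    (s : ℕ) (W A : Finset V) : Finset V :=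
  W.filter fun w => 2 * s ≤ (A.filter fun v => R.Adj w v).card

open Function Sum

namespace SimpleGraph

variable {V ι : Type*}

def IsPanconnectedOn (G : SimpleGraph V) (A : Set V) (M : ℕ) : Prop :=
  ∀ x ∈ A, ∀ y ∈ A, x ≠ y → ∀ ℓ, 2 ≤ ℓ → ℓ ≤ M →
    ∃ q : G.Walk x y, q.IsPath ∧ q.length = ℓ ∧ ∀ v ∈ q.support, v ∈ A

/-- The graph `F` of the theorem, which asks for `2s` neighbours instead of two, is a subgraph of
this one. -/
def attachmentGraph (G : SimpleGraph V) (W : Set V) (A : ι → Set V) : SimpleGraph (V ⊕ ι) :=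
  fromRel fun a b => ∃ w i, a = inl w ∧ b = inr i ∧ w ∈ W ∧ (A i ∩ G.neighborSet w).Nontrivial

section attachmentGraph

variable {G : SimpleGraph V} {W : Set V} {A : ι → Set V}

@[simp] lemma attachmentGraph_adj_inl_inr {w : V} {i : ι} :
    (G.attachmentGraph W A).Adj (inl w) (inr i) ↔
      w ∈ W ∧ (A i ∩ G.neighborSet w).Nontrivial := by
  simp [attachmentGraph]

@[simp] lemma attachmentGraph_adj_inr_inl {w : V} {i : ι} :
    (G.attachmentGraph W A).Adj (inr i) (inl w) ↔
      w ∈ W ∧ (A i ∩ G.neighborSet w).Nontrivial := by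
  simp [attachmentGraph]

@[simp] lemma not_attachmentGraph_adj_inl_inl {u v : V} :
    ¬ (G.attachmentGraph W A).Adj (inl u) (inl v) := by
  simp [attachmentGraph]

@[simp] lemma not_attachmentGraph_adj_inr_inr {i j : ι} :
    ¬ (G.attachmentGraph W A).Adj (inr i) (inr j) := by
  simp [attachmentGraph]

lemma attachmentGraph_le_completeBipartiteGraph :
    G.attachmentGraph W A ≤ completeBipartiteGraph V ι := by
  rintro (u | i) (u' | i') h <;> simp_all [attachmentGraph]

end attachmentGraph

namespace Walk

variable {G : SimpleGraph V} {H : SimpleGraph (V ⊕ ι)}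

lemma IsPath.append_of_disjoint {u v w : V} {p : G.Walk u v} {q : G.Walk v w}
    (hp : p.IsPath) (hq : q.IsPath) (h : p.support.Disjoint q.support.tail) :
    (p.append q).IsPath := by
  rw [isPath_def, support_append]
  exact List.nodup_append'.2
    ⟨hp.support_nodup, hq.support_nodup.sublist (List.tail_sublist _), h⟩

def rightSupport {a b : V ⊕ ι} (p : H.Walk a b) : List ι :=
  p.support.filterMap getRight?

@[simp] lemma rightSupport_nil {a : V ⊕ ι} :
    (nil : H.Walk a a).rightSupport = a.getRight?.toList := by
  cases a <;> rfl

@[simp] lemma rightSupport_cons {a b c : V ⊕ ι} (h : H.Adj a b) (p : H.Walk b c) :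
    (cons h p).rightSupport = a.getRight?.toList ++ p.rightSupport := by
  cases a <;> rfl

lemma length_add_isRight_add_isRight (hH : H ≤ completeBipartiteGraph V ι) {a b : V ⊕ ι}
    (p : H.Walk a b) :
    p.length + a.isRight.toNat + b.isRight.toNat = 2 * p.rightSupport.length := by
  induction p with
  | @nil u => rcases u with u | i <;> simp
  | @cons u v w h p ih =>
    have huv := hH h
    rcases u with u | i <;> rcases v with v | j <;> (simp_all; try omega)

lemma IsPath.length_rightSupport_le [Fintype ι] {a b : V ⊕ ι} {p : H.Walk a b}
    (hp : p.IsPath) : p.rightSupport.length ≤ Fintype.card ι := by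
  refine (hp.support_nodup.filterMap ?_).length_le_card
  rintro (u | i) (u' | i') j <;> simp_all

/-- Lifts of `p` to `G` are kept inside its shadow; that is what makes their concatenations
paths. -/
def shadow (W : Set V) (A : ι → Set V) {a b : V ⊕ ι} (p : H.Walk a b) : Set V :=
  {v | v ∈ W ∧ inl v ∈ p.support ∨ ∃ i, inr i ∈ p.support ∧ v ∈ A i}

section shadow

variable {W : Set V} {A : ι → Set V} {a b : V ⊕ ι} {p : H.Walk a b} {v : V}

lemma mem_shadow_cons {a' : V ⊕ ι} {h : H.Adj a' a} :
    v ∈ (cons h p).shadow W A ↔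
      (v ∈ W ∧ a' = inl v ∨ ∃ i, a' = inr i ∧ v ∈ A i) ∨ v ∈ p.shadow W A := by
  simp only [shadow, Set.mem_ofPred_eq, support_cons, List.mem_cons]
  aesop

lemma inl_mem_support_of_mem_shadow (hWA : ∀ i, Disjoint W (A i)) (hv : v ∈ p.shadow W A)
    (hvW : v ∈ W) : inl v ∈ p.support := by
  rcases hv with ⟨-, hv⟩ | ⟨i, -, hvi⟩
  · exact hv
  · exact absurd hvi (Set.disjoint_left.mp (hWA i) hvW)

lemma inr_mem_support_of_mem_shadow (hWA : ∀ i, Disjoint W (A i))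
    (hA : Pairwise (Disjoint on A)) (hv : v ∈ p.shadow W A) {i : ι} (hvi : v ∈ A i) :
    inr i ∈ p.support := by
  rcases hv with ⟨hvW, -⟩ | ⟨j, hj, hvj⟩
  · exact absurd hvi (Set.disjoint_left.mp (hWA i) hvW)
  · obtain rfl : j = i := by_contra fun hji => Set.disjoint_left.mp (hA hji) hvj hvi
    exact hj

end shadow

end Walk

lemma exists_eq_add_add_of_le_mul {M j T : ℕ} (h₁ : 4 * (j + 1) ≤ T + 1)
    (h₂ : T + 1 ≤ (M + 2) * (j + 1)) :
    ∃ ℓ T', 2 ≤ ℓ ∧ ℓ ≤ M ∧ 4 * j ≤ T' ∧ T' ≤ (M + 2) * j ∧ T = ℓ + 1 + T' := by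
  have hM : 2 ≤ M := by
    by_contra! hM
    have : (M + 2) * (j + 1) ≤ 3 * (j + 1) := Nat.mul_le_mul_right _ (by omega)
    omega
  rw [show (M + 2) * (j + 1) = M * j + M + 2 * j + 2 by ring] at h₂
  rw [show (M + 2) * j = M * j + 2 * j by ring]
  have hK : 2 * j ≤ M * j := Nat.mul_le_mul_right j hM
  generalize M * j = K at h₂ hK ⊢
  refine ⟨min M (T - 1 - 4 * j), T - 1 - min M (T - 1 - 4 * j), ?_, ?_, ?_, ?_, ?_⟩ <;> omega

section lift

variable {G : SimpleGraph V} {W : Set V} {A : ι → Set V}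

open Walk

lemma isPath_cons_of_subset_shadow (hWA : ∀ i, Disjoint W (A i)) {u x w : V} {i : ι}
    {b : V ⊕ ι} {h : (G.attachmentGraph W A).Adj (inl u) (inr i)}
    {p : (G.attachmentGraph W A).Walk (inr i) b} (hp : (cons h p).IsPath) (hux : G.Adj u x)
    {P : G.Walk x w} (hP : P.IsPath) (hPp : ∀ v ∈ P.support, v ∈ p.shadow W A) :
    (cons hux P).IsPath ∧ ∀ v ∈ (cons hux P).support, v ∈ (cons h p).shadow W A := by
  have huW := (attachmentGraph_adj_inl_inr.mp h).1
  have huP : u ∉ P.support := fun hu =>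
    ((cons_isPath_iff _ _).mp hp).2 (inl_mem_support_of_mem_shadow hWA (hPp u hu) huW)
  refine ⟨hP.cons huP, fun v hv => ?_⟩
  rw [support_cons, List.mem_cons] at hv
  rcases hv with rfl | hv
  · exact mem_shadow_cons.2 (Or.inl (Or.inl ⟨huW, rfl⟩))
  · exact mem_shadow_cons.2 (Or.inr (hPp v hv))

lemma isPath_append_cons_of_subset_shadow (hWA : ∀ i, Disjoint W (A i))
    (hA : Pairwise (Disjoint on A)) {x y u w : V} {i : ι} {b : V ⊕ ι}
    {h : (G.attachmentGraph W A).Adj (inr i) (inl u)}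
    {p : (G.attachmentGraph W A).Walk (inl u) b} (hp : (cons h p).IsPath) {Q : G.Walk x y}
    (hQ : Q.IsPath) (hQA : ∀ v ∈ Q.support, v ∈ A i) (hyu : G.Adj y u) {P : G.Walk u w}
    (hP : P.IsPath) (hPp : ∀ v ∈ P.support, v ∈ p.shadow W A) :
    (Q.append (cons hyu P)).IsPath ∧
      ∀ v ∈ (Q.append (cons hyu P)).support, v ∈ (cons h p).shadow W A := by
  have hPA : ∀ v ∈ P.support, v ∉ A i := fun v hv hvA =>
    ((cons_isPath_iff _ _).mp hp).2 (inr_mem_support_of_mem_shadow hWA hA (hPp v hv) hvA)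
  have hyA := hQA y Q.end_mem_support
  refine ⟨hQ.append_of_disjoint (hP.cons (hPA y · hyA)) fun v hvQ hvP => hPA v hvP (hQA v hvQ),
    fun v hv => ?_⟩
  rw [mem_support_append_iff, support_cons, List.mem_cons] at hv
  rcases hv with hv | rfl | hv
  · exact mem_shadow_cons.2 (Or.inl (Or.inr ⟨i, rfl, hQA v hv⟩))
  · exact mem_shadow_cons.2 (Or.inl (Or.inr ⟨i, rfl, hyA⟩))
  · exact mem_shadow_cons.2 (Or.inr (hPp v hv))

/-- Every part on `p` contributes a segment of length `ℓ + 2` with `ℓ ∈ [2, M]`; a lift starting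
inside the first part lacks that part's attaching edge, whence `T + 1` in the second case. -/
theorem exists_isPath_of_isPath_attachmentGraph (hWA : ∀ i, Disjoint W (A i))
    (hA : Pairwise (Disjoint on A)) {M : ℕ} (hpan : ∀ i, G.IsPanconnectedOn (A i) M) {w : V}
    (hw : w ∈ W) {a : V ⊕ ι} (p : (G.attachmentGraph W A).Walk a (inl w)) (hp : p.IsPath) :
    (∀ u, a = inl u → ∀ T, 4 * p.rightSupport.length ≤ T →
      T ≤ (M + 2) * p.rightSupport.length →
      ∃ P : G.Walk u w, P.IsPath ∧ P.length = T ∧ ∀ v ∈ P.support, v ∈ p.shadow W A) ∧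
    (∀ i, a = inr i → ∀ x ∈ A i, ∀ T, 4 * p.rightSupport.length ≤ T + 1 →
      T + 1 ≤ (M + 2) * p.rightSupport.length →
      ∃ P : G.Walk x w, P.IsPath ∧ P.length = T ∧ ∀ v ∈ P.support, v ∈ p.shadow W A) := by
  generalize hb : inl w = b at p hp
  induction p with
  | nil =>
    subst hb
    refine ⟨?_, fun i hi => by simp at hi⟩
    rintro u ⟨⟩ T - h₂
    obtain rfl : T = 0 := by simpa using h₂
    exact ⟨nil, by simp, rfl, by simp [shadow, hw]⟩
  | @cons a a' b h p ih =>
    have ih := ih hb hp.of_cons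
    have hlen := length_add_isRight_add_isRight attachmentGraph_le_completeBipartiteGraph p
    subst hb
    rcases a with u | i <;> rcases a' with u' | i'
    · simp at h
    · refine ⟨?_, fun i hi => by simp at hi⟩
      rintro u ⟨⟩ T h₁ h₂
      obtain ⟨x, hxA, hux : G.Adj u x⟩ := (attachmentGraph_adj_inl_inr.mp h).2.nonempty
      simp only [rightSupport_cons, getRight?_inl, Option.toList_none, List.nil_append] at h₁ h₂
      simp only [isRight_inr, isRight_inl, Bool.toNat_true, Bool.toNat_false] at hlen
      obtain ⟨P, hP, hPlen, hPp⟩ := ih.2 i' rfl x hxA (T - 1) (by omega) (by omega)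
      have hlift := isPath_cons_of_subset_shadow hWA hp hux hP hPp
      exact ⟨_, hlift.1, by rw [length_cons]; omega, hlift.2⟩
    · refine ⟨fun u hu => by simp at hu, ?_⟩
      rintro i ⟨⟩ x hxA T h₁ h₂
      simp only [rightSupport_cons, getRight?_inr, Option.toList_some, List.singleton_append,
        List.length_cons] at h₁ h₂
      obtain ⟨ℓ, T', hℓ₁, hℓ₂, hT'₁, hT'₂, rfl⟩ := exists_eq_add_add_of_le_mul h₁ h₂
      obtain ⟨y, ⟨hyA, huy : G.Adj u' y⟩, hyx⟩ :=
        (attachmentGraph_adj_inr_inl.mp h).2.exists_ne x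
      obtain ⟨Q, hQ, hQlen, hQA⟩ := hpan i x hxA y hyA hyx.symm ℓ hℓ₁ hℓ₂
      obtain ⟨P, hP, hPlen, hPp⟩ := ih.1 u' rfl T' hT'₁ hT'₂
      have hlift := isPath_append_cons_of_subset_shadow hWA hA hp hQ hQA huy.symm hP hPp
      exact ⟨_, hlift.1, by rw [length_append, length_cons]; omega, hlift.2⟩
    · simp at h

theorem exists_isCycle_of_isPath_attachmentGraph (hWA : ∀ i, Disjoint W (A i))
    (hA : Pairwise (Disjoint on A)) {M : ℕ} (hpan : ∀ i, G.IsPanconnectedOn (A i) M) {w : V}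
    {i : ι} (h : (G.attachmentGraph W A).Adj (inl w) (inr i))
    {p : (G.attachmentGraph W A).Walk (inr i) (inl w)} (hp : p.IsPath) {T : ℕ}
    (h₁ : 4 * p.rightSupport.length ≤ T) (h₂ : T ≤ (M + 2) * p.rightSupport.length) :
    ∃ (v : V) (C : G.Walk v v), C.IsCycle ∧ C.length = T := by
  obtain ⟨hwW, hN⟩ := attachmentGraph_adj_inl_inr.mp h
  obtain ⟨x, hxA, hwx : G.Adj w x⟩ := hN.nonempty
  have hlen := length_add_isRight_add_isRight attachmentGraph_le_completeBipartiteGraph p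
  simp only [isRight_inr, isRight_inl, Bool.toNat_true, Bool.toNat_false] at hlen
  obtain ⟨P, hP, hPlen, -⟩ := (exists_isPath_of_isPath_attachmentGraph hWA hA hpan hwW p hp).2
    i rfl x hxA (T - 1) (by omega) (by omega)
  refine ⟨w, cons hwx P, (cons_isCycle_iff _ _).mpr ⟨hP, fun he => ?_⟩,
    by rw [length_cons]; omega⟩
  have := hP.length_eq_one_of_mem_edges (by rwa [Sym2.eq_swap] at he)
  omega

theorem isAcyclic_attachmentGraph [Fintype ι] (hWA : ∀ i, Disjoint W (A i))
    (hA : Pairwise (Disjoint on A)) {m : ℕ} (hpan : ∀ i, G.IsPanconnectedOn (A i) (m / 2))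
    (hm : 4 * Fintype.card ι ≤ m) (hG : ¬ HasCycleLen G m) :
    (G.attachmentGraph W A).IsAcyclic := by
  classical
  suffices ∀ w (c : (G.attachmentGraph W A).Walk (inl w) (inl w)), ¬ c.IsCycle by
    rintro (w | i) c hc
    · exact this w c hc
    · cases c with
      | nil => exact not_isCycle_nil hc
      | @cons _ a _ h p =>
        rcases a with w | j
        · exact this w _ (hc.rotate (by simp))
        · simp at h
  intro w c hc
  cases c with
  | nil => exact not_isCycle_nil hc
  | @cons _ a _ h p =>
    rcases a with w | i
    · simp at h
    have hp := ((cons_isCycle_iff _ _).mp hc).1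
    have h3 := hc.three_le_length
    have hlen := length_add_isRight_add_isRight attachmentGraph_le_completeBipartiteGraph p
    have hcard := hp.length_rightSupport_le
    simp only [isRight_inr, isRight_inl, Bool.toNat_true, Bool.toNat_false, length_cons]
      at hlen h3
    refine hG (exists_isCycle_of_isPath_attachmentGraph hWA hA hpan h hp (T := m) (by omega) ?_)
    calc m ≤ (m / 2 + 2) * 2 := by omega
      _ ≤ (m / 2 + 2) * p.rightSupport.length := Nat.mul_le_mul_left _ (by omega)

end lift

end SimpleGraph

lemma nontrivial_inter_neighborSet_of_mem_bigNbrSet {V : Type*} [DecidableEq V]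
    {R : SimpleGraph V} [DecidableRel R.Adj] {s : ℕ} (hs : 0 < s) {W A : Finset V} {w : V}
    (hw : w ∈ bigNbrSet R s W A) : ((A : Set V) ∩ R.neighborSet w).Nontrivial := by
  have hA : (A : Set V) ∩ R.neighborSet w = ↑(A.filter fun v => R.Adj w v) := by ext; simp
  rw [hA]
  exact Finset.one_lt_card_iff_nontrivial.mp (by have := (Finset.mem_filter.mp hw).2; omega)

theorem stmt10_general (V : Type*) [DecidableEq V]
    (R : SimpleGraph V) [DecidableRel R.Adj]
    (s : ℕ)
    (W : Finset V) (Vp : Fin s → Finset V)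
    (hdisjWV : ∀ i, Disjoint W (Vp i))
    (hdisjVV : ∀ i j, i ≠ j → Disjoint (Vp i) (Vp j))
    (m : ℕ) (hm : 4 * s ≤ m)
    (hnoCm : ¬ HasCycleLen R m)
    (hpaths : ∀ i, ∀ x ∈ Vp i, ∀ y ∈ Vp i, x ≠ y → ∀ L : ℕ, 2 ≤ L → L ≤ m / 2 →
      ∃ pw : R.Walk x y, pw.IsPath ∧ pw.length = L ∧ ∀ v ∈ pw.support, v ∈ Vp i) :
    (SimpleGraph.fromRel fun a b : V ⊕ Fin s =>
      ∃ w i, a = Sum.inl w ∧ b = Sum.inr i ∧ w ∈ W ∧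
        w ∈ Vp i ∪ bigNbrSet R s W (Vp i)).IsAcyclic := by
  have hattach : ∀ w i, w ∈ W → w ∈ Vp i ∪ bigNbrSet R s W (Vp i) →
      (R.attachmentGraph W (fun i => Vp i)).Adj (Sum.inl w) (Sum.inr i) := by
    intro w i hwW hwU
    have hwV : w ∉ Vp i := Finset.disjoint_left.mp (hdisjWV i) hwW
    exact SimpleGraph.attachmentGraph_adj_inl_inr.mpr ⟨hwW,
      nontrivial_inter_neighborSet_of_mem_bigNbrSet i.pos
        ((Finset.mem_union.mp hwU).resolve_left hwV)⟩
  refine SimpleGraph.IsAcyclic.anti ?_ (SimpleGraph.isAcyclic_attachmentGraph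
    (fun i => Finset.disjoint_coe.mpr (hdisjWV i))
    (fun i j hij => Finset.disjoint_coe.mpr (hdisjVV i j hij)) hpaths (by simpa using hm) hnoCm)
  rintro a b ⟨-, ⟨w, i, rfl, rfl, hwW, hwU⟩ | ⟨w, i, rfl, rfl, hwW, hwU⟩⟩
  · exact hattach w i hwW hwU
  · exact (hattach w i hwW hwU).symm

theorem stmt10 (V : Type*) [Fintype V] [DecidableEq V]
    (R : SimpleGraph V) [DecidableRel R.Adj]
    (s : ℕ) (hs : 2 ≤ s)
    (W : Finset V) (Vp : Fin s → Finset V)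
    (hWcard : W.card ≤ s - 1)
    (hdisjWV : ∀ i, Disjoint W (Vp i))
    (hdisjVV : ∀ i j, i ≠ j → Disjoint (Vp i) (Vp j))
    (hcover : ∀ v : V, v ∈ W ∨ ∃ i, v ∈ Vp i)
    (hnoedge : ∀ i j, i ≠ j → ∀ x ∈ Vp i, ∀ y ∈ Vp j, ¬ R.Adj x y)
    (h2conn : ∀ i, TwoConnectedOn R (Vp i))
    (m : ℕ) (hmEven : Even m) (hm : 4 * s ≤ m)
    (hnoCm : ¬ HasCycleLen R m)
    (hunion : ∀ i j, i ≠ j → m ≤ (Vp i ∪ Vp j).card)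
    (hpaths : ∀ i, ∀ x ∈ Vp i, ∀ y ∈ Vp i, x ≠ y → ∀ L : ℕ, 2 ≤ L → L ≤ m / 2 →
      ∃ pw : R.Walk x y, pw.IsPath ∧ pw.length = L ∧ ∀ v ∈ pw.support, v ∈ Vp i) :
    (SimpleGraph.fromRel fun a b : V ⊕ Fin s =>
      ∃ w i, a = Sum.inl w ∧ b = Sum.inr i ∧ w ∈ W ∧
        w ∈ Vp i ∪ bigNbrSet R s W (Vp i)).IsAcyclic :=
  stmt10_general V R s W Vp hdisjWV hdisjVV m hm hnoCm hpaths
end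

section
/- Assume the partition setup for R, W, V_1, …, V_s, W_1, …, W_s, U_1, …, U_s, with integers t ≥ 2, k ≥ 3 and k ≤ s ≤ t+k. Let K = 2.4·10^7·(t+k)^5, let m be an even integer with m ≥ 1.728·10^10·(t+k)^9, suppose R contains no cycle of length m, and suppose 2·δ(R) > m + K + 2s. Then V = U_1 ∪ U_2 ∪ ⋯ ∪ U_s. -/
/-!
A vertex `w ∈ W` lying in no `W_i` has at most `2s - 1` neighbours in each `V_i`, and all its
other neighbours lie in `W`, so `deg w ≤ |W| + s (2s - 1) < 2s²`. Since `s ≤ t + k`, this is far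
below the minimum degree.
-/

namespace SimpleGraph

variable {V ι : Type*} [Fintype V] [DecidableEq V] [Fintype ι]
  (R : SimpleGraph V) [DecidableRel R.Adj]

theorem degree_le_card_add_sum_card_filter_adj (W : Finset V) (A : ι → Finset V)
    (hcover : ∀ u : V, u ∈ W ∨ ∃ i, u ∈ A i) (v : V) :
    R.degree v ≤ W.card + ∑ i, ((A i).filter (R.Adj v)).card := by
  have hsub : R.neighborFinset v ⊆ W ∪ Finset.univ.biUnion fun i => (A i).filter (R.Adj v) := by
    intro u hu
    rw [mem_neighborFinset] at hu
    rcases hcover u with h | ⟨i, h⟩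
    · exact Finset.mem_union_left _ h
    · exact Finset.mem_union_right _ (Finset.mem_biUnion.2 ⟨i, Finset.mem_univ _, by simp [h, hu]⟩)
  calc R.degree v = (R.neighborFinset v).card := (card_neighborFinset_eq_degree R v).symm
    _ ≤ _ := Finset.card_le_card hsub
    _ ≤ _ := Finset.card_union_le _ _
    _ ≤ _ := Nat.add_le_add_left Finset.card_biUnion_le _

theorem degree_add_card_le_of_forall_notMem_bigNbrSet (s : ℕ) (W : Finset V) (A : ι → Finset V)
    (hcover : ∀ u : V, u ∈ W ∨ ∃ i, u ∈ A i) {v : V} (hvW : v ∈ W)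
    (hv : ∀ i, v ∉ bigNbrSet R s W (A i)) :
    R.degree v + Fintype.card ι ≤ W.card + Fintype.card ι * (2 * s) := by
  have hfew : ∀ i, ((A i).filter (R.Adj v)).card + 1 ≤ 2 * s := fun i => by
    simpa only [bigNbrSet, Finset.mem_filter, hvW, true_and, not_le, Nat.lt_iff_add_one_le]
      using hv i
  have hsum : ∑ i, (((A i).filter (R.Adj v)).card + 1) ≤ Fintype.card ι * (2 * s) := by
    simpa using Finset.sum_le_sum fun i (_ : i ∈ Finset.univ) => hfew i
  rw [Finset.sum_add_distrib] at hsum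
  have := R.degree_le_card_add_sum_card_filter_adj W A hcover v
  simp only [Finset.sum_const, Finset.card_univ, smul_eq_mul, mul_one] at hsum
  omega

end SimpleGraph

theorem stmt11_general (V : Type*) [Fintype V] [DecidableEq V]
    (R : SimpleGraph V) [DecidableRel R.Adj]
    (s t k : ℕ)
    (hstk : s ≤ t + k)
    (W : Finset V) (Vp : Fin s → Finset V)
    (hWcard : W.card ≤ s - 1)
    (hcover : ∀ v : V, v ∈ W ∨ ∃ i, v ∈ Vp i)
    (m : ℕ)
    (hdeg : m + 24000000 * (t + k) ^ 5 + 2 * s < 2 * R.minDegree) :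
    (Finset.univ : Finset V) =
      Finset.univ.biUnion (fun i => Vp i ∪ bigNbrSet R s W (Vp i)) := by
  refine (Finset.eq_univ_of_forall fun v => ?_).symm
  simp only [Finset.mem_biUnion, Finset.mem_univ, true_and, Finset.mem_union]
  rcases hcover v with hvW | ⟨i, hvi⟩
  · by_contra! hv
    have hdegv := R.degree_add_card_le_of_forall_notMem_bigNbrSet s W Vp hcover hvW
      fun i => (hv i).2
    rw [Fintype.card_fin] at hdegv
    have hW : W.card + 1 ≤ s := by
      have := Finset.card_pos.2 ⟨v, hvW⟩
      omega
    have hsq : s * s ≤ (t + k) ^ 5 := calc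
      s * s ≤ (t + k) ^ 2 := by rw [sq]; exact Nat.mul_le_mul hstk hstk
      _ ≤ (t + k) ^ 5 := Nat.pow_le_pow_right (by omega) (by norm_num)
    have hsq2 : s * (2 * s) = 2 * (s * s) := by ring
    have := R.minDegree_le_degree v
    omega
  · exact ⟨i, Or.inl hvi⟩

theorem stmt11 (V : Type*) [Fintype V] [DecidableEq V]
    (R : SimpleGraph V) [DecidableRel R.Adj]
    (s t k : ℕ) (hs : 2 ≤ s) (ht : 2 ≤ t) (hk : 3 ≤ k)
    (hks : k ≤ s) (hstk : s ≤ t + k)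
    (W : Finset V) (Vp : Fin s → Finset V)
    (hWcard : W.card ≤ s - 1)
    (hdisjWV : ∀ i, Disjoint W (Vp i))
    (hdisjVV : ∀ i j, i ≠ j → Disjoint (Vp i) (Vp j))
    (hcover : ∀ v : V, v ∈ W ∨ ∃ i, v ∈ Vp i)
    (hnoedge : ∀ i j, i ≠ j → ∀ x ∈ Vp i, ∀ y ∈ Vp j, ¬ R.Adj x y)
    (h2conn : ∀ i, TwoConnectedOn R (Vp i))
    (m : ℕ) (hmEven : Even m) (hm : 17280000000 * (t + k) ^ 9 ≤ m)
    (hnoCm : ¬ HasCycleLen R m)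
    (hdeg : m + 24000000 * (t + k) ^ 5 + 2 * s < 2 * R.minDegree) :
    (Finset.univ : Finset V) =
      Finset.univ.biUnion (fun i => Vp i ∪ bigNbrSet R s W (Vp i)) :=
  stmt11_general V R s t k hstk W Vp hWcard hcover m hdeg
end

section
/- Assume the partition setup for R, W, V_1, …, V_s, W_1, …, W_s, U_1, …, U_s, and let k and n be positive integers with k ≤ s. Suppose δ(R) ≥ 2s² + s, and suppose that for every k pairwise nonadjacent vertices u_1, …, u_k of R, the number of vertices of V distinct from u_1, …, u_k that are nonadjacent in R to every u_i is at most n−1 (i.e., the complement of R contains no B_n^{(k)}). Then for any distinct indices i_1, …, i_k ∈ {1, …, s}, |V \ (U_{i_1} ∪ ⋯ ∪ U_{i_k})| ≤ n−1. -/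
theorem stmt14 (V : Type*) [Fintype V] [DecidableEq V]
    (R : SimpleGraph V) [DecidableRel R.Adj]
    (s : ℕ) (hs : 2 ≤ s)
    (W : Finset V) (Vp : Fin s → Finset V)
    (hWcard : W.card ≤ s - 1)
    (hdisjWV : ∀ i, Disjoint W (Vp i))
    (hdisjVV : ∀ i j, i ≠ j → Disjoint (Vp i) (Vp j))
    (hcover : ∀ v : V, v ∈ W ∨ ∃ i, v ∈ Vp i)
    (hnoedge : ∀ i j, i ≠ j → ∀ x ∈ Vp i, ∀ y ∈ Vp j, ¬ R.Adj x y)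
    (h2conn : ∀ i, TwoConnectedOn R (Vp i))
    (k n : ℕ) (hk : 0 < k) (hn : 0 < n) (hks : k ≤ s)
    (hdeg : 2 * s ^ 2 + s ≤ R.minDegree)
    (hbookfree : ∀ S : Finset V, S.card = k →
      (∀ u ∈ S, ∀ v ∈ S, u ≠ v → ¬ R.Adj u v) →
      (Finset.univ.filter fun v => v ∉ S ∧ ∀ u ∈ S, ¬ R.Adj u v).card ≤ n - 1) :
    ∀ I : Finset (Fin s), I.card = k →
      (Finset.univ \ I.biUnion (fun i => Vp i ∪ bigNbrSet R s W (Vp i))).card ≤ n - 1 := by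
  classical
  -- Each part Vp i is large.
  have hVcard : ∀ i, 2 * s ^ 2 + 2 ≤ (Vp i).card := by
    intro i
    obtain ⟨v, hv⟩ : (Vp i).Nonempty := Finset.card_pos.mp (by have := (h2conn i).1; omega)
    have hsub : R.neighborFinset v ⊆ (Vp i ∪ W).erase v := by
      intro y hy
      rw [SimpleGraph.mem_neighborFinset] at hy
      refine Finset.mem_erase.mpr ⟨hy.ne', ?_⟩
      rcases hcover y with hyW | ⟨j, hyj⟩
      · exact Finset.mem_union_right _ hyW
      · rcases eq_or_ne j i with rfl | hne
        · exact Finset.mem_union_left _ hyj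
        · exact absurd hy (hnoedge i j (Ne.symm hne) v hv y hyj)
    have h1 : R.minDegree ≤ R.degree v := R.minDegree_le_degree v
    have h2 : R.degree v ≤ ((Vp i ∪ W).erase v).card := by
      rw [← SimpleGraph.card_neighborFinset_eq_degree]
      exact Finset.card_le_card hsub
    have h3 : ((Vp i ∪ W).erase v).card = (Vp i ∪ W).card - 1 :=
      Finset.card_erase_of_mem (Finset.mem_union_left _ hv)
    have h4 : (Vp i ∪ W).card ≤ (Vp i).card + W.card := Finset.card_union_le _ _
    obtain ⟨t, ht⟩ : ∃ t, s ^ 2 = t := ⟨_, rfl⟩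
    rw [ht] at hdeg ⊢
    omega
  -- The "bad" vertices of Vp i: adjacent to some w ∈ W with few neighbours in Vp i.
  set B : Fin s → Finset V := fun i =>
    (Vp i).filter (fun x => ∃ w ∈ W,
      ((Vp i).filter fun v => R.Adj w v).card < 2 * s ∧ R.Adj w x) with hB
  have hBcard : ∀ i, (B i).card < (Vp i).card := by
    intro i
    have hsub : B i ⊆ W.biUnion fun w =>
        if ((Vp i).filter fun v => R.Adj w v).card < 2 * s
        then (Vp i).filter fun v => R.Adj w v else ∅ := by
      intro x hx
      simp only [hB, Finset.mem_filter] at hx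
      obtain ⟨hxV, w, hw, hcnt, hadj⟩ := hx
      refine Finset.mem_biUnion.mpr ⟨w, hw, ?_⟩
      rw [if_pos hcnt]
      exact Finset.mem_filter.mpr ⟨hxV, hadj⟩
    have hterm : ∀ w ∈ W,
        (if ((Vp i).filter fun v => R.Adj w v).card < 2 * s
          then (Vp i).filter fun v => R.Adj w v else ∅).card ≤ 2 * s - 1 := by
      intro w _
      split
      · next h => omega
      · simp
    have h1 : (B i).card ≤ W.card * (2 * s - 1) := by
      calc (B i).card ≤ _ := Finset.card_le_card hsub
        _ ≤ ∑ w ∈ W, _ := Finset.card_biUnion_le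
        _ ≤ ∑ _w ∈ W, (2 * s - 1) := Finset.sum_le_sum hterm
        _ = W.card * (2 * s - 1) := by rw [Finset.sum_const, smul_eq_mul]
    have h2 : W.card * (2 * s - 1) ≤ (s - 1) * (2 * s - 1) :=
      Nat.mul_le_mul_right _ hWcard
    have h3 : (s - 1) * (2 * s - 1) < 2 * s ^ 2 + 2 := by
      obtain ⟨m, rfl⟩ : ∃ m, s = m + 2 := ⟨s - 2, by omega⟩
      have e1 : m + 2 - 1 = m + 1 := by omega
      have e2 : 2 * (m + 2) - 1 = 2 * m + 3 := by omega
      rw [e1, e2]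
      nlinarith
    have h4 := hVcard i
    omega
  -- Choose a good vertex in each part.
  have hex : ∀ i, ∃ x, x ∈ Vp i ∧ x ∉ B i := by
    intro i
    have hne : (Vp i \ B i).Nonempty := by
      rw [← Finset.card_pos]
      have := Finset.le_card_sdiff (B i) (Vp i)
      have := hBcard i
      omega
    obtain ⟨x, hx⟩ := hne
    rw [Finset.mem_sdiff] at hx
    exact ⟨x, hx.1, hx.2⟩
  choose u huV huB using hex
  intro I hI
  have hinj : Set.InjOn u I := by
    intro i _ j _ hij
    by_contra hne
    exact (Finset.disjoint_left.mp (hdisjVV i j hne)) (huV i) (hij ▸ huV j)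
  set S : Finset V := I.image u with hS
  have hScard : S.card = k := by
    rw [hS, Finset.card_image_of_injOn hinj, hI]
  have hSind : ∀ a ∈ S, ∀ b ∈ S, a ≠ b → ¬ R.Adj a b := by
    intro a ha b hb hab
    simp only [hS, Finset.mem_image] at ha hb
    obtain ⟨i, hiI, rfl⟩ := ha
    obtain ⟨j, hjI, rfl⟩ := hb
    have hij : i ≠ j := fun h => hab (by rw [h])
    exact hnoedge i j hij (u i) (huV i) (u j) (huV j)
  have hsubset : (Finset.univ \ I.biUnion (fun i => Vp i ∪ bigNbrSet R s W (Vp i))) ⊆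
      Finset.univ.filter fun v => v ∉ S ∧ ∀ a ∈ S, ¬ R.Adj a v := by
    intro v hv
    rw [Finset.mem_sdiff] at hv
    have hv2 : ∀ i ∈ I, v ∉ Vp i ∪ bigNbrSet R s W (Vp i) := by
      intro i hi hmem
      exact hv.2 (Finset.mem_biUnion.mpr ⟨i, hi, hmem⟩)
    refine Finset.mem_filter.mpr ⟨Finset.mem_univ _, ?_, ?_⟩
    · intro hvS
      simp only [hS, Finset.mem_image] at hvS
      obtain ⟨i, hiI, rfl⟩ := hvS
      exact hv2 i hiI (Finset.mem_union_left _ (huV i))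
    · intro a ha hadj
      simp only [hS, Finset.mem_image] at ha
      obtain ⟨i, hiI, rfl⟩ := ha
      rcases hcover v with hvW | ⟨j, hvj⟩
      · have hsmall : ((Vp i).filter fun x => R.Adj v x).card < 2 * s := by
          by_contra hbig
          exact hv2 i hiI (Finset.mem_union_right _
            (Finset.mem_filter.mpr ⟨hvW, by omega⟩))
        have : u i ∈ B i := by
          simp only [hB, Finset.mem_filter]
          exact ⟨huV i, v, hvW, hsmall, hadj.symm⟩
        exact huB i this
      · have hji : j ≠ i := by
          rintro rfl
          exact hv2 j hiI (Finset.mem_union_left _ hvj)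
        exact hnoedge i j (Ne.symm hji) (u i) (huV i) v hvj hadj
  calc (Finset.univ \ I.biUnion (fun i => Vp i ∪ bigNbrSet R s W (Vp i))).card
      ≤ _ := Finset.card_le_card hsubset
    _ ≤ n - 1 := hbookfree S hScard hSind
end

section
/- Let h ≥ 1 be an integer and let U_1, …, U_h be finite sets such that |U_i ∩ (⋃_{1 ≤ j ≤ h, j ≠ i} U_j)| ≥ 2 for every 1 ≤ i ≤ h. Then Σ_{i=1}^{h} |U_i| − |U_1 ∪ ⋯ ∪ U_h| ≥ h. -/
theorem stmt15 {α : Type*} [DecidableEq α] (h : ℕ) (hh : 1 ≤ h)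
    (U : Fin h → Finset α)
    (hcap : ∀ i, 2 ≤ (U i ∩ (Finset.univ.erase i).biUnion U).card) :
    (Finset.univ.biUnion U).card + h ≤ ∑ i, (U i).card := by
  classical
  set T := Finset.univ.biUnion U with hT
  set m : α → ℕ := fun x => (Finset.univ.filter (fun i => x ∈ U i)).card with hm
  have hUsub : ∀ i, U i ⊆ T := fun i x hx => Finset.mem_biUnion.mpr ⟨i, Finset.mem_univ i, hx⟩
  -- double counting
  have hdc : ∀ (S : Finset α), ∑ x ∈ S, m x = ∑ i, (S ∩ U i).card := by
    intro S
    simp only [hm, Finset.card_filter]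
    rw [Finset.sum_comm]
    refine Finset.sum_congr rfl fun i _ => ?_
    rw [← Finset.card_filter, Finset.filter_mem_eq_inter]
  set D := T.filter (fun x => 2 ≤ m x) with hD
  have hDsub : D ⊆ T := Finset.filter_subset _ _
  -- U i ∩ (others) ⊆ U i ∩ D
  have hkey : ∀ i, 2 ≤ (D ∩ U i).card := by
    intro i
    refine le_trans (hcap i) (Finset.card_le_card ?_)
    intro x hx
    rw [Finset.mem_inter] at hx
    obtain ⟨hxi, hxo⟩ := hx
    rw [Finset.mem_biUnion] at hxo
    obtain ⟨j, hj, hxj⟩ := hxo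
    have hji : j ≠ i := (Finset.mem_erase.mp hj).1
    rw [Finset.mem_inter]
    refine ⟨Finset.mem_filter.mpr ⟨hUsub i hxi, ?_⟩, hxi⟩
    have : ({i, j} : Finset (Fin h)) ⊆ Finset.univ.filter (fun k => x ∈ U k) := by
      intro k hk
      rcases Finset.mem_insert.mp hk with rfl | hk
      · exact Finset.mem_filter.mpr ⟨Finset.mem_univ _, hxi⟩
      · rw [Finset.mem_singleton] at hk; subst hk
        exact Finset.mem_filter.mpr ⟨Finset.mem_univ _, hxj⟩
    calc 2 = ({i, j} : Finset (Fin h)).card := by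
              rw [Finset.card_insert_of_notMem (by simp [hji.symm]), Finset.card_singleton]
      _ ≤ _ := Finset.card_le_card this
  have hDsum : 2 * h ≤ ∑ x ∈ D, m x := by
    rw [hdc D]
    calc 2 * h = ∑ _i : Fin h, 2 := by simp [mul_comm]
      _ ≤ ∑ i, (D ∩ U i).card := Finset.sum_le_sum fun i _ => hkey i
  have hDge : h ≤ ∑ x ∈ D, (m x - 1) := by
    have h2 : ∑ x ∈ D, m x ≤ 2 * ∑ x ∈ D, (m x - 1) := by
      rw [Finset.mul_sum]
      refine Finset.sum_le_sum fun x hx => ?_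
      have := (Finset.mem_filter.mp hx).2
      omega
    omega
  have hm1 : ∀ x ∈ T, 1 ≤ m x := by
    intro x hx
    rw [Finset.mem_biUnion] at hx
    obtain ⟨i, _, hxi⟩ := hx
    exact Finset.card_pos.mpr ⟨i, Finset.mem_filter.mpr ⟨Finset.mem_univ _, hxi⟩⟩
  have hTsum : T.card + h ≤ ∑ x ∈ T, m x := by
    have : ∑ x ∈ T, m x = ∑ x ∈ T, (1 + (m x - 1)) :=
      Finset.sum_congr rfl fun x hx => by have := hm1 x hx; omega
    rw [this, Finset.sum_add_distrib, Finset.sum_const, smul_eq_mul, mul_one]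
    have : ∑ x ∈ D, (m x - 1) ≤ ∑ x ∈ T, (m x - 1) :=
      Finset.sum_le_sum_of_subset hDsub
    omega
  calc T.card + h ≤ ∑ x ∈ T, m x := hTsum
    _ = ∑ i, (T ∩ U i).card := hdc T
    _ = ∑ i, (U i).card := by
        refine Finset.sum_congr rfl fun i _ => ?_
        rw [Finset.inter_eq_right.mpr (hUsub i)]
end

section
/- Let t ≥ 2, k ≥ 3, p ≥ 1 and ℓ ≥ 1 be integers with ℓ ≤ k−1, and write k−1 = μℓ + α with integers μ ≥ 1 and 0 ≤ α < ℓ. Let U_1, …, U_{t+k} be finite sets with |U_i| = p+1 for every i ∈ {1, …, t+k}, and suppose that |U_{i_1} ∪ U_{i_2} ∪ ⋯ ∪ U_{i_k}| ≥ kp + ℓ + 1 for any k distinct indices i_1, …, i_k ∈ {1, …, t+k}. Then μ·(Σ_{i=1}^{t+k} |U_i| − |U_1 ∪ ⋯ ∪ U_{t+k}|) ≤ (μ−1)(t+k−α) + α·μ²; equivalently, |U_1 ∪ ⋯ ∪ U_{t+k}| ≥ Σ_{i=1}^{t+k} |U_i| − ((μ−1)/μ)(t+k−α) − αμ. -/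
/-!
Call two indices adjacent when their sets meet. On a connected component `C` of this
intersection graph the duplication number is at least `|C| - 1`, and more precisely `C` contains,
for every `b ≤ |C|`, a connected subfamily of `b` indices with duplication at least `b - 1`;
the duplication of the whole family is the sum over the components.

Call `C` heavy when `μ |C| ≤ (μ + 1) dup(C)`. Fill `k` indices with whole components, heavy
ones first, and complete them by a connected piece of one further component. The hypothesis on
`k`-fold unions bounds the duplication `E` of the whole components used by `E + ℓ + 1 ≤ k` and
`E + ℓ ≤ V`, their total size; this rules out that heavy components alone exceed `k`, so every
component left over is light, i.e. has at most `μ` members and duplication `|C| - 1`. Summing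
`μ E ≤ (μ - 1) V + a` over the used components and `μ dup(C) ≤ (μ - 1) |C|` over the others
gives `μ · dup ≤ (μ - 1)(t + k) + a`.
-/

open Finset

section Duplication

variable {ι α : Type*} [DecidableEq α] (U : ι → Finset α)

def duplication (S : Finset ι) : ℕ :=
  ∑ i ∈ S, #(U i) - #(S.biUnion U)

theorem duplication_add_card_biUnion (S : Finset ι) :
    duplication U S + #(S.biUnion U) = ∑ i ∈ S, #(U i) :=
  Nat.sub_add_cancel card_biUnion_le

variable [DecidableEq ι]

theorem duplication_add_duplication_le {A B : Finset ι} (h : Disjoint A B) :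
    duplication U A + duplication U B ≤ duplication U (A ∪ B) := by
  have hsum := sum_union (f := fun i => #(U i)) h
  have hunion : #((A ∪ B).biUnion U) ≤ #(A.biUnion U) + #(B.biUnion U) := by
    rw [union_biUnion]; exact card_union_le _ _
  have := duplication_add_card_biUnion U A
  have := duplication_add_card_biUnion U B
  have := duplication_add_card_biUnion U (A ∪ B)
  omega

theorem duplication_mono {S T : Finset ι} (h : S ⊆ T) : duplication U S ≤ duplication U T := by
  calc duplication U S ≤ duplication U S + duplication U (T \ S) := Nat.le_add_right _ _
    _ ≤ duplication U T := by
      simpa only [union_sdiff_of_subset h] using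
        duplication_add_duplication_le U (disjoint_sdiff (s := S) (t := T))

theorem duplication_insert {S : Finset ι} {i : ι} (hi : i ∉ S)
    (hmeet : (U i ∩ S.biUnion U).Nonempty) :
    duplication U S + 1 ≤ duplication U (insert i S) := by
  have hsum := sum_insert (f := fun i => #(U i)) hi
  have hinter := card_union_add_card_inter (U i) (S.biUnion U)
  have := hmeet.card_pos
  have := duplication_add_card_biUnion U S
  have := duplication_add_card_biUnion U (insert i S)
  rw [biUnion_insert] at this
  omega

theorem duplication_biUnion {κ : Type*} (T : Finset κ) (P : κ → Finset ι)
    (hP : (T : Set κ).PairwiseDisjoint P)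
    (hPU : (T : Set κ).PairwiseDisjoint fun c => (P c).biUnion U) :
    duplication U (T.biUnion P) = ∑ c ∈ T, duplication U (P c) := by
  have hsum : ∑ i ∈ T.biUnion P, #(U i) =
      ∑ c ∈ T, duplication U (P c) + ∑ c ∈ T, #((P c).biUnion U) := by
    rw [sum_biUnion hP, ← sum_add_distrib]
    exact sum_congr rfl fun c _ => (duplication_add_card_biUnion U (P c)).symm
  have hcard : #((T.biUnion P).biUnion U) = ∑ c ∈ T, #((P c).biUnion U) := by
    rw [biUnion_biUnion, card_biUnion hPU]
  have := duplication_add_card_biUnion U (T.biUnion P)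
  omega

end Duplication

theorem Finset.exists_sum_le_lt_sum_add {β : Type*} [DecidableEq β] (f : β → ℕ) (s : Finset β)
    {B : ℕ} (hB : B < ∑ c ∈ s, f c) :
    ∃ J ⊆ s, ∃ x ∈ s, x ∉ J ∧ ∑ c ∈ J, f c ≤ B ∧ B < ∑ c ∈ J, f c + f x := by
  induction s using Finset.induction_on with
  | empty => simp at hB
  | insert y s hy ih =>
    rw [sum_insert hy] at hB
    by_cases hs : B < ∑ c ∈ s, f c
    · obtain ⟨J, hJ, x, hx, hxJ, hle, hlt⟩ := ih hs
      exact ⟨J, hJ.trans (subset_insert _ _), x, mem_insert_of_mem hx, hxJ, hle, hlt⟩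
    · exact ⟨s, subset_insert _ _, y, mem_insert_self _ _, hy, by omega, by omega⟩

theorem mul_sum_add_sum_le_of_fill {κ : Type*} [Fintype κ] (v d : κ → ℕ)
    {k ℓ μ a : ℕ} (hk : k = μ * ℓ + a + 1) (ha : a < ℓ) (hv : ∀ c, v c ≤ d c + 1)
    (hsum : k < ∑ c, v c)
    (hfill : ∀ J : Finset κ, ∀ x ∉ J, ∑ c ∈ J, v c ≤ k → k < ∑ c ∈ J, v c + v x →
      ∑ c ∈ J, d c + ℓ + 1 ≤ k ∧ ∑ c ∈ J, d c + ℓ ≤ ∑ c ∈ J, v c) :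
    μ * ∑ c, d c + ∑ c, v c ≤ μ * ∑ c, v c + a := by
  classical
  set H := univ.filter fun c => μ * v c ≤ (μ + 1) * d c
  have hsplit := sum_add_sum_compl H v
  by_cases hH : k < ∑ c ∈ H, v c
  · exfalso
    obtain ⟨J, hJH, x, -, hxJ, hJk, hkJ⟩ := H.exists_sum_le_lt_sum_add v hH
    obtain ⟨h1, h2⟩ := hfill J x hxJ hJk hkJ
    have hheavy : μ * ∑ c ∈ J, v c ≤ (μ + 1) * ∑ c ∈ J, d c := by
      rw [mul_sum, mul_sum]
      exact sum_le_sum fun c hc => (mem_filter.mp (hJH hc)).2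
    -- `E + ℓ ≤ V` and `μ V ≤ (μ + 1) E` force `μ ℓ ≤ E`, against `E + ℓ ≤ μ ℓ + a`.
    nlinarith
  · obtain ⟨J, hJH, x, hxH, hxJ, hJk, hkJ⟩ :=
      Hᶜ.exists_sum_le_lt_sum_add v (B := k - ∑ c ∈ H, v c) (by omega)
    have hdisj : Disjoint H J := disjoint_of_subset_right hJH disjoint_compl_right
    have hHJ := sum_union (f := v) hdisj
    obtain ⟨h1, h2⟩ := hfill (H ∪ J) x
      (fun h => (mem_union.mp h).elim (mem_compl.mp hxH) hxJ) (by omega) (by omega)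
    have hlight : ∀ c ∈ (H ∪ J)ᶜ, μ * d c + v c ≤ μ * v c := by
      intro c hc
      have : c ∉ H := fun h => (mem_compl.mp hc) (mem_union_left _ h)
      simp only [H, mem_filter, mem_univ, true_and, not_le] at this
      nlinarith [hv c]
    have hrest := sum_le_sum hlight
    rw [sum_add_distrib, ← mul_sum, ← mul_sum] at hrest
    rw [← sum_add_sum_compl (H ∪ J) d, ← sum_add_sum_compl (H ∪ J) v]
    subst hk
    obtain _ | m := μ
    · omega
    · nlinarith [Nat.mul_le_mul_left m h2]

theorem SimpleGraph.Reachable.exists_adj_of_mem_of_notMem {V : Type*} {G : SimpleGraph V}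
    {S : Set V} {u w : V} (h : G.Reachable u w) (hu : u ∈ S) (hw : w ∉ S) :
    ∃ x ∈ S, ∃ y ∉ S, G.Adj x y := by
  obtain ⟨p⟩ := h
  obtain ⟨d, -, hd⟩ := p.exists_boundary_dart S hu hw
  exact ⟨d.fst, hd.1, d.snd, hd.2, d.adj⟩

section IntersectionGraph

variable {ι α : Type*} [DecidableEq α] (U : ι → Finset α)

def intersectionGraph : SimpleGraph ι where
  Adj i j := i ≠ j ∧ (U i ∩ U j).Nonempty
  symm := ⟨fun _ _ h => ⟨h.1.symm, by rw [inter_comm]; exact h.2⟩⟩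
  loopless := ⟨fun _ h => h.1 rfl⟩

instance [DecidableEq ι] : DecidableRel (intersectionGraph U).Adj :=
  fun i j => inferInstanceAs (Decidable (i ≠ j ∧ (U i ∩ U j).Nonempty))

variable [Fintype ι]

open Classical in
noncomputable def component (c : (intersectionGraph U).ConnectedComponent) : Finset ι :=
  {i | (intersectionGraph U).connectedComponentMk i = c}

@[simp]
theorem mem_component {c : (intersectionGraph U).ConnectedComponent} {i : ι} :
    i ∈ component U c ↔ (intersectionGraph U).connectedComponentMk i = c := by
  simp [component]

theorem pairwiseDisjoint_component (s : Set (intersectionGraph U).ConnectedComponent) :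
    s.PairwiseDisjoint (component U) := fun _ _ _ _ hcc' =>
  disjoint_left.mpr fun _ hi hi' => hcc' ((mem_component U).mp hi ▸ (mem_component U).mp hi')

variable [DecidableEq ι]

theorem exists_subset_component_card_eq (c : (intersectionGraph U).ConnectedComponent) {b : ℕ}
    (hb : b ≤ #(component U c)) :
    ∃ S ⊆ component U c, #S = b ∧ b ≤ duplication U S + 1 := by
  induction b with
  | zero => exact ⟨∅, empty_subset _, card_empty, by omega⟩
  | succ b ih =>
    obtain ⟨S, hSc, hSb, hSdup⟩ := ih (by omega)
    obtain ⟨w, hwc, hwS⟩ := exists_of_ssubset (ssubset_of_subset_of_ne hSc (by rintro rfl; omega))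
    rcases S.eq_empty_or_nonempty with rfl | ⟨u, huS⟩
    · obtain rfl : b = 0 := by simpa using hSb.symm
      exact ⟨{w}, singleton_subset_iff.mpr hwc, card_singleton w, by omega⟩
    have hreach : (intersectionGraph U).Reachable u w :=
      SimpleGraph.ConnectedComponent.exact
        (((mem_component U).mp (hSc huS)).trans ((mem_component U).mp hwc).symm)
    obtain ⟨x, hxS, y, hyS, hxy⟩ :=
      hreach.exists_adj_of_mem_of_notMem (S := (S : Set ι)) huS (by simpa using hwS)
    have hyc : y ∈ component U c := by
      have := hSc hxS
      simp only [mem_component] at this ⊢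
      rw [← SimpleGraph.ConnectedComponent.connectedComponentMk_eq_of_adj hxy, this]
    obtain ⟨z, hz⟩ := hxy.2
    have hmeet : (U y ∩ S.biUnion U).Nonempty :=
      ⟨z, mem_inter.mpr ⟨(mem_inter.mp hz).2, mem_biUnion.mpr ⟨x, hxS, (mem_inter.mp hz).1⟩⟩⟩
    refine ⟨insert y S, insert_subset hyc hSc, ?_, ?_⟩
    · rw [card_insert_of_notMem (by simpa using hyS), hSb]
    · have := duplication_insert U (by simpa using hyS) hmeet
      omega

theorem duplication_biUnion_component (T : Finset (intersectionGraph U).ConnectedComponent) :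
    duplication U (T.biUnion (component U)) = ∑ c ∈ T, duplication U (component U c) := by
  refine duplication_biUnion U T _ (pairwiseDisjoint_component U _) fun c _ c' _ hcc' => ?_
  refine disjoint_left.mpr fun z hz hz' => hcc' ?_
  obtain ⟨i, hi, hzi⟩ := mem_biUnion.mp hz
  obtain ⟨j, hj, hzj⟩ := mem_biUnion.mp hz'
  simp only [mem_component] at hi hj
  rw [← hi, ← hj]
  by_cases hij : i = j
  · rw [hij]
  · exact SimpleGraph.ConnectedComponent.connectedComponentMk_eq_of_adj
      ⟨hij, ⟨z, mem_inter.mpr ⟨hzi, hzj⟩⟩⟩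

theorem biUnion_component_univ : univ.biUnion (component U) = univ := by
  ext i; simp

theorem sum_card_component : ∑ c, #(component U c) = Fintype.card ι := by
  rw [← card_biUnion (pairwiseDisjoint_component U _), biUnion_component_univ, card_univ]

theorem sum_duplication_component_le_of_fill {k ℓ : ℕ}
    (hU : ∀ S : Finset ι, #S ≤ k → duplication U S + ℓ + 1 ≤ k)
    (J : Finset (intersectionGraph U).ConnectedComponent)
    {x : (intersectionGraph U).ConnectedComponent} (hxJ : x ∉ J)
    (hJ : ∑ c ∈ J, #(component U c) ≤ k) (hJx : k < ∑ c ∈ J, #(component U c) + #(component U x)) :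
    ∑ c ∈ J, duplication U (component U c) + ℓ + 1 ≤ k ∧
      ∑ c ∈ J, duplication U (component U c) + ℓ ≤ ∑ c ∈ J, #(component U c) := by
  obtain ⟨S, hSx, hS, hSdup⟩ :=
    exists_subset_component_card_eq U x (b := k - ∑ c ∈ J, #(component U c)) (by omega)
  have hdisj : Disjoint (J.biUnion (component U)) S :=
    (disjoint_biUnion_left _ _ _).mpr fun c hc => disjoint_of_subset_right hSx
      (pairwiseDisjoint_component U Set.univ trivial trivial (ne_of_mem_of_not_mem hc hxJ))
  have hcard : #(J.biUnion (component U) ∪ S) = k := by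
    rw [card_union_of_disjoint hdisj, card_biUnion fun c _ c' _ => pairwiseDisjoint_component U
      Set.univ trivial trivial, hS]
    omega
  have hle := hU _ hcard.le
  have hsup := duplication_add_duplication_le U hdisj
  rw [duplication_biUnion_component] at hsup
  omega

theorem mul_duplication_univ_add_card_le {k ℓ μ a : ℕ} (hk : k = μ * ℓ + a + 1) (ha : a < ℓ)
    (hn : k < Fintype.card ι) (hU : ∀ S : Finset ι, #S ≤ k → duplication U S + ℓ + 1 ≤ k) :
    μ * duplication U univ + Fintype.card ι ≤ μ * Fintype.card ι + a := by
  have htree : ∀ c, #(component U c) ≤ duplication U (component U c) + 1 := fun c => by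
    obtain ⟨S, hSc, hS, hSdup⟩ := exists_subset_component_card_eq U c le_rfl
    rwa [eq_of_subset_of_card_le hSc hS.ge] at hSdup
  have := mul_sum_add_sum_le_of_fill _ _ hk ha htree (by rwa [sum_card_component])
    fun J x hxJ => sum_duplication_component_le_of_fill U hU J hxJ
  rwa [sum_card_component, ← duplication_biUnion_component, biUnion_component_univ] at this

end IntersectionGraph

theorem duplication_add_le_of_card_union {ι α : Type*} [Fintype ι] [DecidableEq ι] [DecidableEq α]
    {U : ι → Finset α} {k ℓ p : ℕ} (hcard : ∀ i, #(U i) = p + 1)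
    (hunion : ∀ S : Finset ι, #S = k → k * p + ℓ + 1 ≤ #(S.biUnion U)) (hk : k ≤ Fintype.card ι)
    (S : Finset ι) (hS : #S ≤ k) : duplication U S + ℓ + 1 ≤ k := by
  obtain ⟨T, hST, -, hT⟩ := exists_subsuperset_card_eq (subset_univ S) hS (by rwa [card_univ])
  have hsum : ∑ i ∈ T, #(U i) = k * p + k := by
    rw [sum_congr rfl fun i _ => hcard i, sum_const, hT, smul_eq_mul, mul_add_one]
  have := duplication_add_card_biUnion U T
  have := hunion T hT
  have := duplication_mono U hST
  omega

theorem mul_le_sub_one_mul_sub_add_mul_sq {μ D n a : ℕ} (h : μ * D + n ≤ μ * n + a)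
    (ha : a ≤ n) : μ * D ≤ (μ - 1) * (n - a) + a * μ ^ 2 := by
  obtain _ | m := μ
  · simp
  obtain ⟨r, rfl⟩ := Nat.exists_eq_add_of_le ha
  rw [Nat.add_sub_cancel, Nat.add_sub_cancel_left]
  nlinarith [Nat.zero_le (a * m ^ 2), Nat.zero_le (a * m)]

theorem stmt16_general {α : Type*} [DecidableEq α] (t k p ℓ μ a : ℕ)
    (ht : 2 ≤ t) (hk : 3 ≤ k)
    (hdecomp : k - 1 = μ * ℓ + a) (ha : a < ℓ)
    (U : Fin (t + k) → Finset α) (hcard : ∀ i, (U i).card = p + 1)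
    (hunion : ∀ S : Finset (Fin (t + k)), S.card = k →
      k * p + ℓ + 1 ≤ (S.biUnion U).card) :
    μ * (∑ i, (U i).card - (Finset.univ.biUnion U).card) ≤
      (μ - 1) * (t + k - a) + a * μ ^ 2 := by
  have hk' : k = μ * ℓ + a + 1 := by omega
  have hn : k < Fintype.card (Fin (t + k)) := by rw [Fintype.card_fin]; omega
  have key := mul_duplication_univ_add_card_le U hk' ha hn
    (duplication_add_le_of_card_union hcard hunion hn.le)
  rw [Fintype.card_fin] at key
  exact mul_le_sub_one_mul_sub_add_mul_sq key (by omega)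

theorem stmt16 {α : Type*} [DecidableEq α] (t k p ℓ μ a : ℕ)
    (ht : 2 ≤ t) (hk : 3 ≤ k) (hp : 1 ≤ p) (hℓ1 : 1 ≤ ℓ) (hℓ2 : ℓ ≤ k - 1)
    (hμ : 1 ≤ μ) (hdecomp : k - 1 = μ * ℓ + a) (ha : a < ℓ)
    (U : Fin (t + k) → Finset α) (hcard : ∀ i, (U i).card = p + 1)
    (hunion : ∀ S : Finset (Fin (t + k)), S.card = k →
      k * p + ℓ + 1 ≤ (S.biUnion U).card) :
    μ * (∑ i, (U i).card - (Finset.univ.biUnion U).card) ≤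
      (μ - 1) * (t + k - a) + a * μ ^ 2 :=
  stmt16_general t k p ℓ μ a ht hk hdecomp ha U hcard hunion
end

section
/- Let t ≥ 1, k ≥ 2, p ≥ 1 and ℓ be integers with 1 ≤ ℓ ≤ k−1. Let U_1, …, U_{t+k} be finite sets with |U_i| = p+1 for every i, and suppose that every k-element subfamily of {U_1, …, U_{t+k}} has duplication number at most k−ℓ−1. Let b be the maximum, over all (t+1)-element subfamilies of {U_1, …, U_{t+k}}, of the duplication number of the subfamily. Then Σ_{i=1}^{t+k} |U_i| − |U_1 ∪ ⋯ ∪ U_{t+k}| ≤ k − ℓ − 1 + b. -/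
/-- The duplication number of the subfamily of `U` indexed by `S`. -/
def dupNumber {ι α : Type*} [DecidableEq α] (U : ι → Finset α) (S : Finset ι) : ℕ :=
  ∑ i ∈ S, (U i).card - (S.biUnion U).card

/-!
Call an index set *chained* if it can be grown from one index by repeatedly adding an index
whose set meets the union of the sets already present; a chained family of `n` sets has
duplication number at least `n - 1`, and it has chained subfamilies of every size.
Split the indices into maximal chained clusters, which have pairwise disjoint unions, so
duplication numbers add up over them. A *tree* cluster (duplication number exactly `n - 1`)
can be cut into two chained pieces of sizes `c` and `n + 1 - c` whose duplication numbers
add up to at least that of the cluster. If the other clusters had total size at least `k`,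
whole clusters together with one chained piece would form `k` sets with duplication number
at least `k - 1 > k - ℓ - 1`. Hence the tree clusters have total size at least `t + 1`, and
cutting them at `t + 1` splits the family into `t + 1` sets and `k` sets (sharing one set of
a cluster) whose duplication numbers add up to at least the total one.
-/

section

open Finset

variable {ι α : Type*} [DecidableEq α] (U : ι → Finset α)

def Apart (A B : Finset ι) : Prop :=
  Disjoint A B ∧ Disjoint (A.biUnion U) (B.biUnion U)

variable {U}

lemma Apart.symm {A B : Finset ι} (h : Apart U A B) : Apart U B A :=
  ⟨h.1.symm, h.2.symm⟩

lemma Apart.mono {A B A' B' : Finset ι} (h : Apart U A B) (hA : A' ⊆ A) (hB : B' ⊆ B) :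
    Apart U A' B' :=
  ⟨h.1.mono hA hB,
    h.2.mono (biUnion_subset_biUnion_of_subset_left U hA)
      (biUnion_subset_biUnion_of_subset_left U hB)⟩

variable [DecidableEq ι]

lemma dupNumber_insert (U : ι → Finset α) {S : Finset ι} {w : ι} (hw : w ∉ S) :
    dupNumber U (insert w S) = dupNumber U S + (U w ∩ S.biUnion U).card := by
  have h₁ := card_union_add_card_inter (U w) (S.biUnion U)
  have h₂ : (S.biUnion U).card ≤ ∑ i ∈ S, (U i).card := card_biUnion_le
  unfold dupNumber
  rw [sum_insert hw, biUnion_insert]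
  omega

lemma Apart.union_left {A B C : Finset ι} (hA : Apart U A C) (hB : Apart U B C) :
    Apart U (A ∪ B) C :=
  ⟨disjoint_union_left.2 ⟨hA.1, hB.1⟩, by
    rw [union_biUnion]
    exact disjoint_union_left.2 ⟨hA.2, hB.2⟩⟩

lemma dupNumber_union_of_apart {A B : Finset ι} (h : Apart U A B) :
    dupNumber U (A ∪ B) = dupNumber U A + dupNumber U B := by
  have hA : (A.biUnion U).card ≤ ∑ i ∈ A, (U i).card := card_biUnion_le
  have hB : (B.biUnion U).card ≤ ∑ i ∈ B, (U i).card := card_biUnion_le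
  unfold dupNumber
  rw [sum_union h.1, union_biUnion, card_union_of_disjoint h.2]
  omega

variable (U) in
inductive Chained : Finset ι → Prop
  | singleton (v : ι) : Chained {v}
  | grow {S : Finset ι} {w : ι} (hS : Chained S) (hw : w ∉ S)
      (hmeet : ¬Disjoint (U w) (S.biUnion U)) : Chained (insert w S)

lemma Chained.card_le_dupNumber_add_one {S : Finset ι} (h : Chained U S) :
    S.card ≤ dupNumber U S + 1 := by
  induction h with
  | singleton v => simp
  | grow _ hw hmeet ih =>
    rw [card_insert_of_notMem hw, dupNumber_insert U hw]
    have := card_pos.2 (not_disjoint_iff_nonempty_inter.1 hmeet)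
    omega

lemma Chained.exists_subset_card_eq {S : Finset ι} (h : Chained U S) {σ : ℕ} (hσ : 1 ≤ σ)
    (hσS : σ ≤ S.card) : ∃ S' ⊆ S, Chained U S' ∧ S'.card = σ := by
  induction h generalizing σ with
  | singleton v => exact ⟨{v}, subset_rfl, singleton v, by simp at hσS ⊢; omega⟩
  | @grow S w hS hw hmeet ih =>
    rw [card_insert_of_notMem hw] at hσS
    by_cases hσ' : σ ≤ S.card
    · obtain ⟨S', hS'S, hS', hcard⟩ := ih hσ hσ'
      exact ⟨S', hS'S.trans (subset_insert w S), hS', hcard⟩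
    · exact ⟨insert w S, subset_rfl, hS.grow hw hmeet, by
        rw [card_insert_of_notMem hw]; omega⟩

lemma exists_chained_apart_sdiff {X : Finset ι} {v : ι} (hv : v ∈ X) :
    ∃ C ⊆ X, v ∈ C ∧ Chained U C ∧ Apart U C (X \ C) := by
  classical
  let P := X.powerset.filter fun C => v ∈ C ∧ Chained U C
  have hvP : {v} ∈ P := by simpa [P] using ⟨hv, Chained.singleton v⟩
  obtain ⟨C, hCP, hCmax⟩ := P.exists_max_image card ⟨{v}, hvP⟩
  simp only [P, mem_filter, mem_powerset] at hCP
  obtain ⟨hCX, hvC, hC⟩ := hCP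
  refine ⟨C, hCX, hvC, hC, disjoint_sdiff, (disjoint_biUnion_right _ _ _).2 fun w hw => ?_⟩
  obtain ⟨hwX, hwC⟩ := mem_sdiff.1 hw
  by_contra hmeet
  have hmem : insert w C ∈ P := by
    simp only [P, mem_filter, mem_powerset]
    exact ⟨insert_subset hwX hCX, mem_insert_of_mem hvC, hC.grow hwC (by rwa [disjoint_comm])⟩
  have := hCmax _ hmem
  rw [card_insert_of_notMem hwC] at this
  omega

variable (U) in
def Splittable (X : Finset ι) : Prop :=
  ∀ c, 1 ≤ c → c ≤ X.card → ∃ T ⊆ X, ∃ S ⊆ X,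
    T.card = c ∧ S.card + c = X.card + 1 ∧ dupNumber U X ≤ dupNumber U T + dupNumber U S

lemma Chained.splittable {C : Finset ι} (hC : Chained U C)
    (htree : dupNumber U C + 1 ≤ C.card) : Splittable U C := by
  intro c hc hcC
  obtain ⟨T, hTC, hT, hTc⟩ := hC.exists_subset_card_eq hc hcC
  obtain ⟨S, hSC, hS, hSc⟩ := hC.exists_subset_card_eq (σ := C.card + 1 - c) (by omega) (by omega)
  have := hT.card_le_dupNumber_add_one
  have := hS.card_le_dupNumber_add_one
  exact ⟨T, hTC, S, hSC, hTc, by omega, by omega⟩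

lemma Splittable.union {X Y : Finset ι} (h : Apart U X Y) (hX : Splittable U X)
    (hY : Splittable U Y) : Splittable U (X ∪ Y) := by
  intro c hc hcXY
  rw [card_union_of_disjoint h.1] at hcXY ⊢
  rw [dupNumber_union_of_apart h]
  by_cases hcX : c ≤ X.card
  · obtain ⟨T, hTX, S, hSX, hTc, hSc, hdup⟩ := hX c hc hcX
    have hSY : Apart U S Y := h.mono hSX subset_rfl
    refine ⟨T, hTX.trans subset_union_left, S ∪ Y, union_subset_union hSX subset_rfl, hTc, ?_, ?_⟩
    · rw [card_union_of_disjoint hSY.1]; omega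
    · rw [dupNumber_union_of_apart hSY]; omega
  · obtain ⟨T, hTY, S, hSY, hTc, hSc, hdup⟩ := hY (c - X.card) (by omega) (by omega)
    have hXT : Apart U X T := h.mono subset_rfl hTY
    refine ⟨X ∪ T, union_subset_union subset_rfl hTY, S, hSY.trans subset_union_right, ?_, ?_, ?_⟩
    · rw [card_union_of_disjoint hXT.1]; omega
    · omega
    · rw [dupNumber_union_of_apart hXT]; omega

variable (U) in
def Crowded (X : Finset ι) : Prop :=
  ∀ σ ≤ X.card, ∃ S ⊆ X, S.card = σ ∧ σ ≤ dupNumber U S + 1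

lemma Chained.crowded {C : Finset ι} (hC : Chained U C) : Crowded U C := by
  intro σ hσC
  rcases Nat.eq_zero_or_pos σ with rfl | hσ
  · exact ⟨∅, empty_subset C, rfl, Nat.zero_le _⟩
  · obtain ⟨S, hSC, hS, hSσ⟩ := hC.exists_subset_card_eq hσ hσC
    exact ⟨S, hSC, hSσ, hSσ ▸ hS.card_le_dupNumber_add_one⟩

lemma Crowded.union {X Y : Finset ι} (h : Apart U X Y) (hX : Crowded U X)
    (hXdup : X.card ≤ dupNumber U X) (hY : Crowded U Y) : Crowded U (X ∪ Y) := by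
  intro σ hσ
  rw [card_union_of_disjoint h.1] at hσ
  by_cases hσX : σ ≤ X.card
  · obtain ⟨S, hSX, hSσ, hdup⟩ := hX σ hσX
    exact ⟨S, hSX.trans subset_union_left, hSσ, hdup⟩
  · obtain ⟨S, hSY, hSσ, hdup⟩ := hY (σ - X.card) (by omega)
    have hXS : Apart U X S := h.mono subset_rfl hSY
    refine ⟨X ∪ S, union_subset_union subset_rfl hSY, ?_, ?_⟩
    · rw [card_union_of_disjoint hXS.1]; omega
    · rw [dupNumber_union_of_apart hXS]; omega

variable (U) in
lemma exists_splittable_crowded (X : Finset ι) :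
    ∃ R N, R ∪ N = X ∧ Apart U R N ∧ Splittable U R ∧ Crowded U N := by
  induction X using strongInduction with
  | H X ih =>
    rcases X.eq_empty_or_nonempty with rfl | ⟨v, hv⟩
    · refine ⟨∅, ∅, rfl, ⟨disjoint_bot_left, by simp⟩, fun c hc hc0 => ?_, fun σ hσ => ?_⟩
      · exact absurd hc0 (by simp; omega)
      · exact ⟨∅, subset_rfl, by simp_all, by simp_all⟩
    obtain ⟨C, hCX, hvC, hC, hCapart⟩ := exists_chained_apart_sdiff (U := U) hv
    obtain ⟨R, N, hRN, hapart, hR, hN⟩ := ih (X \ C) (sdiff_ssubset hCX ⟨v, hvC⟩)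
    have hXC : C ∪ (X \ C) = X := union_sdiff_of_subset hCX
    have hCR : Apart U C R := hCapart.mono subset_rfl (hRN ▸ subset_union_left)
    have hCN : Apart U C N := hCapart.mono subset_rfl (hRN ▸ subset_union_right)
    by_cases htree : dupNumber U C + 1 ≤ C.card
    · refine ⟨C ∪ R, N, by rw [union_assoc, hRN, hXC], hCN.union_left hapart, ?_, hN⟩
      exact (hC.splittable htree).union hCR hR
    · refine ⟨R, C ∪ N, ?_, (hCR.union_left hapart.symm).symm, hR, ?_⟩
      · rw [union_left_comm, hRN, hXC]
      · exact hC.crowded.union hCN (by omega) hN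

theorem dupNumber_univ_le [Fintype ι] {s k m b : ℕ} (hsk : Fintype.card ι = s + k)
    (hmk : m + 2 ≤ k) (hk : ∀ S : Finset ι, S.card = k → dupNumber U S ≤ m)
    (hs : ∀ T : Finset ι, T.card = s + 1 → dupNumber U T ≤ b) :
    dupNumber U univ ≤ m + b := by
  obtain ⟨R, N, hRN, hapart, hR, hN⟩ := exists_splittable_crowded U univ
  have hcard : R.card + N.card = s + k := by
    rw [← hsk, ← card_univ, ← hRN, card_union_of_disjoint hapart.1]
  by_cases hsR : s + 1 ≤ R.card
  · obtain ⟨T, -, S, hSR, hTc, hSc, hdup⟩ := hR (s + 1) (Nat.succ_pos s) hsR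
    have hSN : Apart U S N := hapart.mono hSR subset_rfl
    have hSNk : (S ∪ N).card = k := by rw [card_union_of_disjoint hSN.1]; omega
    calc dupNumber U univ = dupNumber U R + dupNumber U N := by
          rw [← hRN, dupNumber_union_of_apart hapart]
      _ ≤ dupNumber U (S ∪ N) + dupNumber U T := by
          rw [dupNumber_union_of_apart hSN]; omega
      _ ≤ m + b := add_le_add (hk _ hSNk) (hs T hTc)
  · obtain ⟨S, -, hSk, hdup⟩ := hN k (by omega)
    have := hk S hSk
    omega

end

theorem stmt17_general {α : Type*} [DecidableEq α] (t k ℓ : ℕ)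
    (hℓ1 : 1 ≤ ℓ) (hℓ2 : ℓ ≤ k - 1)
    (U : Fin (t + k) → Finset α)
    (hdup : ∀ S : Finset (Fin (t + k)), S.card = k → dupNumber U S ≤ k - ℓ - 1)
    (b : ℕ)
    (hb : IsGreatest {d | ∃ S : Finset (Fin (t + k)), S.card = t + 1 ∧
      d = dupNumber U S} b) :
    ∑ i, (U i).card - (Finset.univ.biUnion U).card ≤ k - ℓ - 1 + b :=
  dupNumber_univ_le (Fintype.card_fin _) (by omega) hdup fun T hT => hb.2 ⟨T, hT, rfl⟩

theorem stmt17 {α : Type*} [DecidableEq α] (t k p ℓ : ℕ)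
    (ht : 1 ≤ t) (hk : 2 ≤ k) (hp : 1 ≤ p) (hℓ1 : 1 ≤ ℓ) (hℓ2 : ℓ ≤ k - 1)
    (U : Fin (t + k) → Finset α) (hcard : ∀ i, (U i).card = p + 1)
    (hdup : ∀ S : Finset (Fin (t + k)), S.card = k → dupNumber U S ≤ k - ℓ - 1)
    (b : ℕ)
    (hb : IsGreatest {d | ∃ S : Finset (Fin (t + k)), S.card = t + 1 ∧
      d = dupNumber U S} b) :
    ∑ i, (U i).card - (Finset.univ.biUnion U).card ≤ k - ℓ - 1 + b :=
  stmt17_general t k ℓ hℓ1 hℓ2 U hdup b hb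
end

section
/- Let t ≥ 1, k ≥ 3, p ≥ 1 and ℓ be integers with 1 ≤ ℓ ≤ k−2. Let U_1, …, U_{t+k} be finite sets with |U_i| = p+1 for every i. Suppose that every k-element subfamily of {U_1, …, U_{t+k}} has duplication number at most k−ℓ−1, and that the subfamily {U_1, …, U_{k−2}} has duplication number exactly k−ℓ−2. Let b be the maximum, over all (t+1)-element subfamilies of {U_1, …, U_{t+k}}, of the duplication number of the subfamily. Then Σ_{i=k−1}^{t+k} |U_i| − |U_{k−1} ∪ U_k ∪ ⋯ ∪ U_{t+k}| ≤ b + 1. -/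
section Helpers
set_option linter.unusedSectionVars false
variable {ι α : Type*} [DecidableEq ι] [DecidableEq α] (U : ι → Finset α)

lemma dup_un_le_sum (Z : Finset ι) : (Z.biUnion U).card ≤ ∑ i ∈ Z, (U i).card :=
  Finset.card_biUnion_le

lemma biUnion_union_eq (S T : Finset ι) :
    (S ∪ T).biUnion U = S.biUnion U ∪ T.biUnion U := by
  ext a
  simp only [Finset.mem_biUnion, Finset.mem_union]
  constructor
  · rintro ⟨x, hx | hx, ha⟩
    · exact Or.inl ⟨x, hx, ha⟩
    · exact Or.inr ⟨x, hx, ha⟩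
  · rintro (⟨x, hx, ha⟩ | ⟨x, hx, ha⟩)
    · exact ⟨x, Or.inl hx, ha⟩
    · exact ⟨x, Or.inr hx, ha⟩

lemma dup_erase_card {x : ι} {Z : Finset ι} (hx : x ∈ Z) :
    (Z.biUnion U).card + ((U x) ∩ ((Z.erase x).biUnion U)).card
      = ((Z.erase x).biUnion U).card + (U x).card := by
  have h1 : Z.biUnion U = ((Z.erase x).biUnion U) ∪ U x := by
    conv_lhs => rw [← Finset.insert_erase hx]
    rw [Finset.biUnion_insert, Finset.union_comm]
  rw [h1, Finset.inter_comm, Finset.card_union_add_card_inter]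

/-- Removing one index from the family changes the duplication number by the
overlap of the removed set with the union of the remaining ones. -/
lemma dup_erase {x : ι} {Z : Finset ι} (hx : x ∈ Z) :
    dupNumber U Z = dupNumber U (Z.erase x) + ((U x) ∩ ((Z.erase x).biUnion U)).card := by
  have h1 := dup_erase_card U hx
  have h2 : ∑ i ∈ Z.erase x, (U i).card + (U x).card = ∑ i ∈ Z, (U i).card :=
    Finset.sum_erase_add Z _ hx
  have h3 := dup_un_le_sum U (Z.erase x)
  have h4 := dup_un_le_sum U Z
  unfold dupNumber
  omega

lemma dup_superadd {S T : Finset ι} (h : Disjoint S T) :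
    dupNumber U S + dupNumber U T ≤ dupNumber U (S ∪ T) := by
  have h1 : ∑ i ∈ S ∪ T, (U i).card = ∑ i ∈ S, (U i).card + ∑ i ∈ T, (U i).card :=
    Finset.sum_union h
  have h2 : ((S ∪ T).biUnion U).card ≤ (S.biUnion U).card + (T.biUnion U).card := by
    rw [biUnion_union_eq]; exact Finset.card_union_le _ _
  have h3 := dup_un_le_sum U S
  have h4 := dup_un_le_sum U T
  unfold dupNumber
  omega

/-- Double counting: the total overlap of each set with the union of the others
is at most twice the duplication number. -/
lemma dup_sum_inter_le (Z : Finset ι) :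
    ∑ x ∈ Z, ((U x) ∩ ((Z.erase x).biUnion U)).card ≤ 2 * dupNumber U Z := by
  classical
  set W := Z.biUnion U with hW
  set m : α → ℕ := fun a => (Z.filter (fun x => a ∈ U x)).card with hm
  have hsub : ∀ x ∈ Z, U x ⊆ W := fun x hx => Finset.subset_biUnion_of_mem U hx
  have hA : ∑ x ∈ Z, (U x).card = ∑ a ∈ W, m a := by
    have h1 : ∀ x ∈ Z, (U x).card = ∑ a ∈ W, (if a ∈ U x then 1 else 0) := by
      intro x hx
      rw [← Finset.card_filter, Finset.filter_mem_eq_inter,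
        Finset.inter_eq_right.mpr (hsub x hx)]
    rw [Finset.sum_congr rfl h1, Finset.sum_comm]
    refine Finset.sum_congr rfl fun a _ => ?_
    simp only [hm, Finset.card_filter]
  have hB : ∑ x ∈ Z, ((U x) ∩ ((Z.erase x).biUnion U)).card
      = ∑ a ∈ W, (Z.filter (fun x => a ∈ (U x) ∩ ((Z.erase x).biUnion U))).card := by
    have h1 : ∀ x ∈ Z, ((U x) ∩ ((Z.erase x).biUnion U)).card
        = ∑ a ∈ W, (if a ∈ (U x) ∩ ((Z.erase x).biUnion U) then 1 else 0) := by
      intro x hx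
      rw [← Finset.card_filter, Finset.filter_mem_eq_inter,
        Finset.inter_eq_right.mpr ((Finset.inter_subset_left).trans (hsub x hx))]
    rw [Finset.sum_congr rfl h1, Finset.sum_comm]
    refine Finset.sum_congr rfl fun a _ => ?_
    rw [Finset.card_filter]
  have hC : ∀ a ∈ W, (Z.filter (fun x => a ∈ (U x) ∩ ((Z.erase x).biUnion U))).card + 2
      ≤ 2 * m a := by
    intro a haW
    have hm1 : 1 ≤ m a := by
      rw [hW, Finset.mem_biUnion] at haW
      obtain ⟨x, hx, hax⟩ := haW
      exact Finset.card_pos.mpr ⟨x, Finset.mem_filter.mpr ⟨hx, hax⟩⟩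
    have hfm : (Z.filter (fun x => a ∈ (U x) ∩ ((Z.erase x).biUnion U))).card ≤ m a := by
      apply Finset.card_le_card
      intro x hx
      rw [Finset.mem_filter] at hx ⊢
      exact ⟨hx.1, (Finset.mem_inter.mp hx.2).1⟩
    by_cases h2 : 2 ≤ m a
    · omega
    · have : (Z.filter (fun x => a ∈ (U x) ∩ ((Z.erase x).biUnion U))) = ∅ := by
        rw [Finset.filter_eq_empty_iff]
        intro x hx hmem
        rw [Finset.mem_inter, Finset.mem_biUnion] at hmem
        obtain ⟨hax, y, hy, hay⟩ := hmem
        have hyZ : y ∈ Z := Finset.mem_of_mem_erase hy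
        have hyx : y ≠ x := Finset.ne_of_mem_erase hy
        have hsub2 : ({y, x} : Finset ι) ⊆ Z.filter (fun x => a ∈ U x) := by
          intro z hz
          rw [Finset.mem_insert, Finset.mem_singleton] at hz
          rcases hz with rfl | rfl
          · exact Finset.mem_filter.mpr ⟨hyZ, hay⟩
          · exact Finset.mem_filter.mpr ⟨hx, hax⟩
        have := Finset.card_le_card hsub2
        rw [Finset.card_pair hyx] at this
        simp only [hm] at h2
        omega
      rw [this]; simp; omega
  have hsum : ∑ a ∈ W, ((Z.filter (fun x => a ∈ (U x) ∩ ((Z.erase x).biUnion U))).card + 2)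
      ≤ ∑ a ∈ W, 2 * m a := Finset.sum_le_sum hC
  rw [Finset.sum_add_distrib, Finset.sum_const, smul_eq_mul, ← Finset.mul_sum, ← hA] at hsum
  have h4 := dup_un_le_sum U Z
  rw [← hW] at h4
  unfold dupNumber
  rw [← hW, hB]
  omega

/-- If `dup Z < |Z|` one can remove an element losing at most 1. -/
lemma dup_cheap_removal {Z : Finset ι} (h : dupNumber U Z + 1 ≤ Z.card) :
    ∃ x ∈ Z, dupNumber U Z ≤ dupNumber U (Z.erase x) + 1 := by
  by_contra hc
  push_neg at hc
  have h2 : ∀ x ∈ Z, 2 ≤ ((U x) ∩ ((Z.erase x).biUnion U)).card := by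
    intro x hx
    have := dup_erase U hx
    have := hc x hx
    omega
  have hs : 2 * Z.card ≤ ∑ x ∈ Z, ((U x) ∩ ((Z.erase x).biUnion U)).card := by
    calc 2 * Z.card = ∑ _x ∈ Z, 2 := by rw [Finset.sum_const, smul_eq_mul]; ring
    _ ≤ _ := Finset.sum_le_sum h2
  have := dup_sum_inter_le U Z
  omega

/-- If `dup Z ≥ |Z| - 1` and `|Z| ≥ 3`, one can remove an element keeping
`dup ≥ |Z| - 2`. -/
lemma dup_good_removal {Z : Finset ι} (h3 : 3 ≤ Z.card)
    (hd : Z.card ≤ dupNumber U Z + 1) :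
    ∃ x ∈ Z, Z.card ≤ dupNumber U (Z.erase x) + 2 := by
  by_contra hc
  push_neg at hc
  set n := Z.card with hn
  set d := dupNumber U Z with hdz
  have h2 : ∀ x ∈ Z, d + 3 ≤ ((U x) ∩ ((Z.erase x).biUnion U)).card + n := by
    intro x hx
    have h4 := dup_erase U hx
    have h5 := hc x hx
    omega
  have hs : n * (d + 3) ≤ (∑ x ∈ Z, ((U x) ∩ ((Z.erase x).biUnion U)).card) + n * n := by
    calc n * (d + 3) = ∑ _x ∈ Z, (d + 3) := by rw [Finset.sum_const, smul_eq_mul]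
    _ ≤ ∑ x ∈ Z, (((U x) ∩ ((Z.erase x).biUnion U)).card + n) := Finset.sum_le_sum h2
    _ = _ := by rw [Finset.sum_add_distrib, Finset.sum_const, smul_eq_mul]
  have hdc := dup_sum_inter_le U Z
  have key : n * (d + 3) ≤ 2 * d + n * n := by omega
  have hd' : n ≤ d + 1 := hd
  nlinarith [mul_le_mul_right hd' n]

/-- Step lemma for shrinking with slack `ℓ`. -/
lemma dup_step {ℓ : ℕ} (hℓ : 1 ≤ ℓ) {Z : Finset ι} {g : ℕ} (hg : 1 ≤ g)
    (h1 : g ≤ dupNumber U Z) (h2 : g + ℓ ≤ Z.card) :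
    ∃ x ∈ Z, g ≤ dupNumber U (Z.erase x) + 1 := by
  by_cases hcase : dupNumber U Z + 1 ≤ Z.card
  · obtain ⟨x, hx, hle⟩ := dup_cheap_removal U hcase
    exact ⟨x, hx, by omega⟩
  · by_cases h3 : 3 ≤ Z.card
    · obtain ⟨x, hx, hle⟩ := dup_good_removal U h3 (by omega)
      exact ⟨x, hx, by omega⟩
    · have hne : Z.Nonempty := Finset.card_pos.mp (by omega)
      obtain ⟨x, hx⟩ := hne
      exact ⟨x, hx, by omega⟩

/-- Shrinking lemma: a set can lose `m` elements while losing at most `m`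
from its duplication number, provided slack `ℓ ≥ 1`. -/
lemma dup_shrink {ℓ : ℕ} (hℓ : 1 ≤ ℓ) :
    ∀ (m : ℕ) (Z : Finset ι) (g : ℕ), m ≤ Z.card → g ≤ dupNumber U Z →
      g + ℓ ≤ Z.card →
      ∃ Z', Z' ⊆ Z ∧ Z'.card + m = Z.card ∧ g ≤ dupNumber U Z' + m := by
  intro m
  induction m with
  | zero => exact fun Z g _ hg _ => ⟨Z, Finset.Subset.refl Z, by omega, by omega⟩
  | succ m ih =>
    intro Z g hm hg hgl
    by_cases hg0 : g = 0
    · obtain ⟨Z', hZ'sub, hZ'card⟩ :=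
        Finset.exists_subset_card_eq (show Z.card - (m + 1) ≤ Z.card by omega)
      exact ⟨Z', hZ'sub, by omega, by omega⟩
    · obtain ⟨x, hx, hle⟩ := dup_step U hℓ (g := g) (by omega) hg hgl
      have hec : (Z.erase x).card = Z.card - 1 := Finset.card_erase_of_mem hx
      obtain ⟨Z', hsub, hcard, hdup⟩ := ih (Z.erase x) (g - 1) (by omega) (by omega) (by omega)
      exact ⟨Z', hsub.trans (Finset.erase_subset x Z), by omega, by omega⟩

/-- Extraction lemma: from a set with `dup ≥ card - 1` and `card ≥ k`, extract
a `k`-subset with `dup ≥ k - 1`. -/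
lemma dup_extract {k : ℕ} (hk : 3 ≤ k) :
    ∀ (m : ℕ) (Z : Finset ι), Z.card = k + m → Z.card ≤ dupNumber U Z + 1 →
      ∃ Y, Y ⊆ Z ∧ Y.card = k ∧ k ≤ dupNumber U Y + 1 := by
  intro m
  induction m with
  | zero => exact fun Z hc hd => ⟨Z, Finset.Subset.refl Z, by omega, by omega⟩
  | succ m ih =>
    intro Z hc hd
    obtain ⟨x, hx, hle⟩ := dup_good_removal U (by omega) hd
    have hec : (Z.erase x).card = Z.card - 1 := Finset.card_erase_of_mem hx
    obtain ⟨Y, hsub, hYc, hYd⟩ := ih (Z.erase x) (by omega) (by omega)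
    exact ⟨Y, hsub.trans (Finset.erase_subset x Z), hYc, hYd⟩

end Helpers

theorem stmt18 {α : Type*} [DecidableEq α] (t k p ℓ : ℕ)
    (ht : 1 ≤ t) (hk : 3 ≤ k) (hp : 1 ≤ p) (hℓ1 : 1 ≤ ℓ) (hℓ2 : ℓ ≤ k - 2)
    (U : Fin (t + k) → Finset α) (hcard : ∀ i, (U i).card = p + 1)
    (hdup : ∀ S : Finset (Fin (t + k)), S.card = k → dupNumber U S ≤ k - ℓ - 1)
    (hfirst : dupNumber U (Finset.univ.filter fun i : Fin (t + k) => (i : ℕ) < k - 2) =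
      k - ℓ - 2)
    (b : ℕ)
    (hb : IsGreatest {d | ∃ S : Finset (Fin (t + k)), S.card = t + 1 ∧
      d = dupNumber U S} b) :
    dupNumber U (Finset.univ.filter fun i : Fin (t + k) => k - 2 ≤ (i : ℕ)) ≤ b + 1 := by
  classical
  have hℓk : ℓ + 2 ≤ k := by omega
  set As := Finset.univ.filter fun i : Fin (t + k) => (i : ℕ) < k - 2 with hAs
  set Bs := Finset.univ.filter fun i : Fin (t + k) => k - 2 ≤ (i : ℕ) with hBs
  have hlt : k - 2 < t + k := by omega
  have eA : As = Finset.Iio (⟨k - 2, hlt⟩ : Fin (t + k)) := by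
    rw [hAs]; ext i; simp [Finset.mem_Iio, Fin.lt_def]
  have eB : Bs = Finset.Ici (⟨k - 2, hlt⟩ : Fin (t + k)) := by
    rw [hBs]; ext i; simp [Finset.mem_Ici, Fin.le_def]
  have hAcard : As.card = k - 2 := by
    rw [eA, Fin.card_Iio]
  have hBcard : Bs.card = t + 2 := by
    rw [eB, Fin.card_Ici]
    simp only [Fin.val_mk]
    omega
  have hABdisj : Disjoint As Bs := by
    rw [Finset.disjoint_left]
    intro i hiA hiB
    rw [hAs, Finset.mem_filter] at hiA
    rw [hBs, Finset.mem_filter] at hiB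
    omega
  by_contra hcon
  push_neg at hcon
  have hBdup : b + 2 ≤ dupNumber U Bs := hcon
  -- every (t+1)-subset has dup ≤ b
  have hub : ∀ S : Finset (Fin (t + k)), S.card = t + 1 → dupNumber U S ≤ b :=
    fun S hS => hb.2 ⟨S, hS, rfl⟩
  -- every element of Bs overlaps the rest of Bs in ≥ 2 points
  have hcx : ∀ x ∈ Bs, 2 ≤ ((U x) ∩ ((Bs.erase x).biUnion U)).card := by
    intro x hx
    have h1 := dup_erase U hx
    have h2 : dupNumber U (Bs.erase x) ≤ b := by
      apply hub
      rw [Finset.card_erase_of_mem hx, hBcard]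
      omega
    omega
  have hsum : 2 * Bs.card ≤ ∑ x ∈ Bs, ((U x) ∩ ((Bs.erase x).biUnion U)).card := by
    calc 2 * Bs.card = ∑ _x ∈ Bs, 2 := by rw [Finset.sum_const, smul_eq_mul]; ring
    _ ≤ _ := Finset.sum_le_sum hcx
  have hdc := dup_sum_inter_le U Bs
  have hBbig : t + 2 ≤ dupNumber U Bs := by omega
  rcases le_or_gt k (t + 2) with hkt | hkt
  · -- extract a k-subset of Bs with dup ≥ k - 1
    obtain ⟨Y, hYsub, hYcard, hYdup⟩ :=
      dup_extract U hk (t + 2 - k) Bs (by omega) (by omega)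
    have := hdup Y hYcard
    omega
  · -- shrink As by t elements, then join with Bs
    have hfd : k - ℓ - 2 ≤ dupNumber U As := le_of_eq hfirst.symm
    obtain ⟨A', hA'sub, hA'card, hA'dup⟩ :=
      dup_shrink U hℓ1 t As (k - ℓ - 2) (by omega) hfd (by omega)
    have hdisj : Disjoint A' Bs := Finset.disjoint_of_subset_left hA'sub hABdisj
    have hScard : (A' ∪ Bs).card = k := by
      rw [Finset.card_union_of_disjoint hdisj]
      omega
    have hsup := dup_superadd U hdisj
    have := hdup (A' ∪ Bs) hScard
    omega
end
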